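/- arXiv:1711.00405 — 9 statements merged into one kernel-verified Lean document; each statement's English description precedes it below -/
import Mathlib

section
/- Let X be an integrable real random variable on a probability space (Ω, P), let π, τ ∈ ℝ satisfy E[(X − τ)⁺] = π, and let A, P' : Ω → ℝ be measurable random variables taking values in {0, 1} such that A ≤ P' pointwise almost surely and P' is independent of X. Then E[A·X] − π·E[P'] ≤ E[A·min(X, τ)]. -/
open MeasureTheory ProbabilityTheory

theorem per_element_utility_bound
    {Ω : Type*} [MeasurableSpace Ω] (P : Measure Ω) [IsProbabilityMeasure P]
    (X A P' : Ω → ℝ) (hX : Integrable X P)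
    (π τ : ℝ) (hτ : ∫ ω, max (X ω - τ) 0 ∂P = π)
    (hA : Measurable A) (hP' : Measurable P')
    (hA01 : ∀ ω, A ω = 0 ∨ A ω = 1) (hP'01 : ∀ ω, P' ω = 0 ∨ P' ω = 1)
    (hAP : ∀ᵐ ω ∂P, A ω ≤ P' ω)
    (hind : IndepFun P' X P) :
    ∫ ω, A ω * X ω ∂P - π * ∫ ω, P' ω ∂P ≤ ∫ ω, A ω * min (X ω) τ ∂P := by
  have hmax : Integrable (fun ω => max (X ω - τ) 0) P :=
    (hX.sub (integrable_const τ)).pos_part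
  have hminid : ∀ ω, min (X ω) τ = X ω - max (X ω - τ) 0 := by
    intro ω
    rcases le_total (X ω) τ with h | h
    · rw [min_eq_left h, max_eq_right (by linarith)]; ring
    · rw [min_eq_right h, max_eq_left (by linarith)]; ring
  have hmin : Integrable (fun ω => min (X ω) τ) P :=
    (hX.sub hmax).congr (by filter_upwards with ω using (hminid ω).symm)
  have hAbd : ∃ C, ∀ ω, ‖A ω‖ ≤ C := ⟨1, fun ω => by rcases hA01 ω with h | h <;> simp [h]⟩
  have hP'bd : ∃ C, ∀ ω, ‖P' ω‖ ≤ C := ⟨1, fun ω => by rcases hP'01 ω with h | h <;> simp [h]⟩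
  have hAX : Integrable (fun ω => A ω * X ω) P := hX.bdd_mul hA.aestronglyMeasurable (ae_of_all _ hAbd.choose_spec)
  have hAmin : Integrable (fun ω => A ω * min (X ω) τ) P :=
    hmin.bdd_mul hA.aestronglyMeasurable (ae_of_all _ hAbd.choose_spec)
  have hAmax : Integrable (fun ω => A ω * max (X ω - τ) 0) P :=
    hmax.bdd_mul hA.aestronglyMeasurable (ae_of_all _ hAbd.choose_spec)
  have hP'max : Integrable (fun ω => P' ω * max (X ω - τ) 0) P :=
    hmax.bdd_mul hP'.aestronglyMeasurable (ae_of_all _ hP'bd.choose_spec)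
  have hind2 : IndepFun P' (fun ω => max (X ω - τ) 0) P :=
    hind.comp measurable_id ((measurable_id.sub measurable_const).max measurable_const)
  have hprod : ∫ ω, P' ω * max (X ω - τ) 0 ∂P = (∫ ω, P' ω ∂P) * π := by
    have := hind2.integral_mul_eq_mul_integral hP'.aestronglyMeasurable
      ((hX.sub (integrable_const τ)).pos_part.aestronglyMeasurable)
    simpa [hτ] using this
  have key : ∫ ω, A ω * X ω ∂P - ∫ ω, A ω * min (X ω) τ ∂P ≤ π * ∫ ω, P' ω ∂P := by
    rw [← integral_sub hAX hAmin]
    have heq : ∀ ω, A ω * X ω - A ω * min (X ω) τ = A ω * max (X ω - τ) 0 := by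
      intro ω; rw [← mul_sub, hminid ω]; ring_nf
    calc ∫ ω, (A ω * X ω - A ω * min (X ω) τ) ∂P
        = ∫ ω, A ω * max (X ω - τ) 0 ∂P := by simp_rw [heq]
      _ ≤ ∫ ω, P' ω * max (X ω - τ) 0 ∂P := by
          refine integral_mono_ae hAmax hP'max ?_
          filter_upwards [hAP] with ω hω
          exact mul_le_mul_of_nonneg_right hω (le_max_right _ _)
      _ = π * ∫ ω, P' ω ∂P := by rw [hprod]; ring
  linarith
end

section
/- Let X be an integrable real random variable on a probability space (Ω, P), let π, τ ∈ ℝ satisfy E[(τ − X)⁺] = π, and let A, P' : Ω → ℝ be measurable random variables taking values in {0, 1} such that A ≤ P' pointwise almost surely and P' is independent of X. Then E[A·X] + π·E[P'] ≥ E[A·max(X, τ)]. -/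
open MeasureTheory ProbabilityTheory

theorem per_element_disutility_bound
    {Ω : Type*} [MeasurableSpace Ω] (P : Measure Ω) [IsProbabilityMeasure P]
    (X A P' : Ω → ℝ) (hX : Integrable X P)
    (π τ : ℝ) (hτ : ∫ ω, max (τ - X ω) 0 ∂P = π)
    (hA : Measurable A) (hP' : Measurable P')
    (hA01 : ∀ ω, A ω = 0 ∨ A ω = 1) (hP'01 : ∀ ω, P' ω = 0 ∨ P' ω = 1)
    (hAP : ∀ᵐ ω ∂P, A ω ≤ P' ω)
    (hind : IndepFun P' X P) :
    ∫ ω, A ω * X ω ∂P + π * ∫ ω, P' ω ∂P ≥ ∫ ω, A ω * max (X ω) τ ∂P := by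
  set g : Ω → ℝ := fun ω => max (τ - X ω) 0 with hgdef
  have hg : Integrable g P := ((integrable_const τ).sub hX).pos_part
  have hAbd : ∀ ω, ‖A ω‖ ≤ 1 := by
    intro ω; rcases hA01 ω with h | h <;> simp [h]
  have hPbd : ∀ ω, ‖P' ω‖ ≤ 1 := by
    intro ω; rcases hP'01 ω with h | h <;> simp [h]
  have hAX : Integrable (fun ω => A ω * X ω) P :=
    hX.bdd_mul hA.aestronglyMeasurable (Filter.Eventually.of_forall hAbd)
  have hAg : Integrable (fun ω => A ω * g ω) P :=
    hg.bdd_mul hA.aestronglyMeasurable (Filter.Eventually.of_forall hAbd)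
  have hPg : Integrable (fun ω => P' ω * g ω) P :=
    hg.bdd_mul hP'.aestronglyMeasurable (Filter.Eventually.of_forall hPbd)
  have hsplit : ∀ ω, A ω * max (X ω) τ = A ω * X ω + A ω * g ω := by
    intro ω
    have : max (X ω) τ = X ω + max (τ - X ω) 0 := by
      rcases le_total (X ω) τ with h | h <;> simp [max_eq_left, max_eq_right, h]
    rw [this, mul_add]
  have h1 : ∫ ω, A ω * max (X ω) τ ∂P
      = ∫ ω, A ω * X ω ∂P + ∫ ω, A ω * g ω ∂P := by
    rw [← integral_add hAX hAg]
    exact integral_congr_ae (Filter.Eventually.of_forall hsplit)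
  have h2 : ∫ ω, A ω * g ω ∂P ≤ ∫ ω, P' ω * g ω ∂P := by
    apply integral_mono_ae hAg hPg
    filter_upwards [hAP] with ω h
    exact mul_le_mul_of_nonneg_right h (le_max_right _ _)
  have hindg : IndepFun P' g P :=
    hind.comp measurable_id ((measurable_const.sub measurable_id).max measurable_const)
  have h3 : ∫ ω, P' ω * g ω ∂P = (∫ ω, P' ω ∂P) * π := by
    rw [← hτ]
    exact hindg.integral_mul_eq_mul_integral hP'.aestronglyMeasurable hg.aestronglyMeasurable
  have : ∫ ω, A ω * g ω ∂P ≤ π * ∫ ω, P' ω ∂P := by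
    rw [mul_comm]; rw [h3] at h2; exact h2
  rw [h1]; linarith
end

section
/- Let V be a finite set, (Ω, P) a probability space, and for each i ∈ V let X_i be an integrable real random variable, π_i ≥ 0 a real number, and τ_i ∈ ℝ with E[(X_i − τ_i)⁺] = π_i. Let h : Finset V → ℝ be any function and let F be a nonempty family of subsets of V. Let Probed, I : Ω → Finset V be measurable maps such that almost surely I(ω) ⊆ Probed(ω) and I(ω) ∈ F, and such that for every i ∈ V the indicator random variable ω ↦ 1[i ∈ Probed(ω)] is independent of X_i. Then E[ Σ_{i ∈ I(ω)} X_i(ω) + h(I(ω)) − Σ_{i ∈ Probed(ω)} π_i ] ≤ E[ max_{S ∈ F} ( Σ_{i ∈ S} min(X_i(ω), τ_i) + h(S) ) ]. -/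
open MeasureTheory ProbabilityTheory

/-- A real function of a finitely-valued measurable map is integrable. -/
lemma integrable_comp_finset
    {V : Type*} [Fintype V] [DecidableEq V]
    {Ω : Type*} [MeasurableSpace Ω] (P : Measure Ω) [IsProbabilityMeasure P]
    (I : Ω → Finset V) (hIm : ∀ S : Finset V, MeasurableSet {ω | I ω = S})
    (φ : Finset V → ℝ) : Integrable (fun ω => φ (I ω)) P := by
  have hrw : (fun ω => φ (I ω))
      = fun ω => ∑ S : Finset V, Set.indicator {ω | I ω = S} (fun _ => φ S) ω := by
    funext ω
    simp only [Set.indicator_apply, Set.mem_setOf_eq]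
    rw [Finset.sum_ite_eq (Finset.univ : Finset (Finset V)) (I ω) (fun S => φ S)]
    simp
  rw [hrw]
  exact integrable_finset_sum _ fun S _ => (integrable_const (φ S)).indicator (hIm S)

lemma integrable_finset_sup'
    {ι : Type*} {Ω : Type*} [MeasurableSpace Ω] (P : Measure Ω)
    {F : Finset ι} (hF : F.Nonempty) (φ : ι → Ω → ℝ)
    (hφ : ∀ S ∈ F, Integrable (φ S) P) :
    Integrable (fun ω => F.sup' hF (fun S => φ S ω)) P := by
  induction hF using Finset.Nonempty.cons_induction with
  | singleton a =>
    simp only [Finset.sup'_singleton]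
    exact hφ a (by simp)
  | cons a s ha hs ih =>
    have heq : (fun ω => (Finset.cons a s ha).sup' (Finset.cons_nonempty ha) (fun S => φ S ω))
        = fun ω => φ a ω ⊔ s.sup' hs (fun S => φ S ω) :=
      funext fun ω => Finset.sup'_cons hs (fun S => φ S ω)
    rw [heq]
    exact ((hφ a (by simp)).sup (ih fun S hS => hφ S (by simp [hS])))

theorem utility_max_optimal_strategy_bound
    {V : Type*} [Fintype V] [DecidableEq V]
    {Ω : Type*} [MeasurableSpace Ω] (P : Measure Ω) [IsProbabilityMeasure P]
    (X : V → Ω → ℝ) (hX : ∀ i, Integrable (X i) P)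
    (π τ : V → ℝ) (hπ : ∀ i, 0 ≤ π i)
    (hτ : ∀ i, ∫ ω, max (X i ω - τ i) 0 ∂P = π i)
    (h : Finset V → ℝ)
    (F : Finset (Finset V)) (hF : F.Nonempty)
    (Probed I : Ω → Finset V)
    (hPm : ∀ S : Finset V, MeasurableSet {ω | Probed ω = S})
    (hIm : ∀ S : Finset V, MeasurableSet {ω | I ω = S})
    (hfeas : ∀ᵐ ω ∂P, I ω ⊆ Probed ω ∧ I ω ∈ F)
    (hind : ∀ i, IndepFun (fun ω => if i ∈ Probed ω then (1 : ℝ) else 0) (X i) P) :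
    ∫ ω, ((∑ i ∈ I ω, X i ω) + h (I ω) - ∑ i ∈ Probed ω, π i) ∂P
      ≤ ∫ ω, F.sup' hF (fun S => (∑ i ∈ S, min (X i ω) (τ i)) + h S) ∂P := by
  classical
  -- notation
  set f : V → Ω → ℝ := fun i ω => if i ∈ Probed ω then (1 : ℝ) else 0 with hf_def
  set g : V → Ω → ℝ := fun i ω => max (X i ω - τ i) 0 with hg_def
  -- measurability of {ω | i ∈ Probed ω}
  have hAmeas : ∀ i, MeasurableSet {ω | i ∈ Probed ω} := by
    intro i
    have : {ω | i ∈ Probed ω} = ⋃ S ∈ (Finset.univ : Finset (Finset V)).filter (fun S => i ∈ S),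
        {ω | Probed ω = S} := by
      ext ω
      simp only [Set.mem_setOf_eq, Set.mem_iUnion, Finset.mem_filter, Finset.mem_univ, true_and]
      exact ⟨fun hm => ⟨Probed ω, hm, rfl⟩, fun ⟨S, hS, hPS⟩ => hPS ▸ hS⟩
    rw [this]
    exact (Finset.univ.filter (fun S => i ∈ S)).measurableSet_biUnion fun S _ => hPm S
  -- f is an indicator, hence integrable and measurable
  have hf_eq : ∀ i, f i = Set.indicator {ω | i ∈ Probed ω} (fun _ => (1 : ℝ)) := by
    intro i; funext ω; simp [hf_def, Set.indicator_apply]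
  have hf_int : ∀ i, Integrable (f i) P := by
    intro i; rw [hf_eq i]
    exact (integrable_const (1 : ℝ)).indicator (hAmeas i)
  have hf_meas : ∀ i, Measurable (f i) := by
    intro i; rw [hf_eq i]
    exact (measurable_const.indicator (hAmeas i))
  -- g is integrable
  have hg_int : ∀ i, Integrable (g i) P := fun i => ((hX i).sub (integrable_const (τ i))).pos_part
  -- independence of f i and g i
  have hfg_indep : ∀ i, IndepFun (f i) (g i) P := by
    intro i
    have hm : Measurable (fun x : ℝ => max (x - τ i) 0) :=
      (measurable_id.sub_const (τ i)).max measurable_const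
    exact (hind i).comp measurable_id hm
  -- key : ∫ f i * g i = (∫ f i) * π i
  have hkey : ∀ i, ∫ ω, f i ω * g i ω ∂P = (∫ ω, f i ω ∂P) * π i := by
    intro i
    have := (hfg_indep i).integral_mul_eq_mul_integral (hf_int i).aestronglyMeasurable (hg_int i).aestronglyMeasurable
    simp only [Pi.mul_apply] at this
    rw [this, hτ i]
  -- value of ∫ f i * π i
  have hkey2 : ∀ i, ∫ ω, f i ω * π i ∂P = (∫ ω, f i ω ∂P) * π i := fun i =>
    integral_mul_const (π i) (f i)
  -- the correction term
  set E : Ω → ℝ := fun ω => ∑ i : V, f i ω * (g i ω - π i) with hE_def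
  have hE_int : Integrable E P := by
    apply integrable_finset_sum
    intro i _
    have h1 : Integrable (fun ω => f i ω * g i ω) P :=
      (hg_int i).bdd_mul (c := 1) (hf_meas i).aestronglyMeasurable
        (ae_of_all _ fun ω => by simp only [hf_def]; split <;> simp)
    have h2 : Integrable (fun ω => f i ω * π i) P := (hf_int i).mul_const (π i)
    simp only [mul_sub]; exact h1.sub h2
  have hE_zero : ∫ ω, E ω ∂P = 0 := by
    rw [hE_def, integral_finset_sum]
    · apply Finset.sum_eq_zero
      intro i _
      have h1 : Integrable (fun ω => f i ω * g i ω) P :=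
        (hg_int i).bdd_mul (c := 1) (hf_meas i).aestronglyMeasurable
          (ae_of_all _ fun ω => by simp only [hf_def]; split <;> simp)
      have h2 : Integrable (fun ω => f i ω * π i) P := (hf_int i).mul_const (π i)
      have : (fun ω => f i ω * (g i ω - π i)) = fun ω => f i ω * g i ω - f i ω * π i := by
        funext ω; ring
      rw [this, integral_sub h1 h2, hkey i, hkey2 i, sub_self]
    · intro i _
      have h1 : Integrable (fun ω => f i ω * g i ω) P :=
        (hg_int i).bdd_mul (c := 1) (hf_meas i).aestronglyMeasurable
          (ae_of_all _ fun ω => by simp only [hf_def]; split <;> simp)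
      have h2 : Integrable (fun ω => f i ω * π i) P := (hf_int i).mul_const (π i)
      simp only [mul_sub]; exact h1.sub h2
  -- the sup' function
  set M : Ω → ℝ := fun ω => F.sup' hF (fun S => (∑ i ∈ S, min (X i ω) (τ i)) + h S) with hM_def
  have hM_int : Integrable M P := by
    apply integrable_finset_sup'
    intro S _
    exact (integrable_finset_sum S fun i _ =>
      (hX i).inf (integrable_const (τ i))).add (integrable_const (h S))
  -- integrability of LHS
  have hL1 : Integrable (fun ω => ∑ i ∈ I ω, X i ω) P := by
    have hfI_eq : ∀ i, (fun ω => if i ∈ I ω then (1 : ℝ) else 0)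
        = Set.indicator {ω | i ∈ I ω} (fun _ => (1 : ℝ)) := by
      intro i; funext ω; simp [Set.indicator_apply]
    have hAmeasI : ∀ i, MeasurableSet {ω | i ∈ I ω} := by
      intro i
      have : {ω | i ∈ I ω} = ⋃ S ∈ (Finset.univ : Finset (Finset V)).filter (fun S => i ∈ S),
          {ω | I ω = S} := by
        ext ω
        simp only [Set.mem_setOf_eq, Set.mem_iUnion, Finset.mem_filter, Finset.mem_univ, true_and]
        exact ⟨fun hm => ⟨I ω, hm, rfl⟩, fun ⟨S, hS, hPS⟩ => hPS ▸ hS⟩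
      rw [this]
      exact (Finset.univ.filter (fun S => i ∈ S)).measurableSet_biUnion fun S _ => hIm S
    have hrw : (fun ω => ∑ i ∈ I ω, X i ω)
        = fun ω => ∑ i : V, (if i ∈ I ω then (1 : ℝ) else 0) * X i ω := by
      funext ω
      rw [Finset.sum_congr rfl (fun i _ => (ite_mul _ _ _ _))]
      simp only [one_mul, zero_mul]
      rw [Finset.sum_ite_mem, Finset.univ_inter]
    rw [hrw]
    apply integrable_finset_sum
    intro i _
    refine (hX i).bdd_mul (c := 1) ?_ (ae_of_all _ fun ω => by split <;> simp)
    rw [hfI_eq i]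
    exact (measurable_const.indicator (hAmeasI i)).aestronglyMeasurable
  have hLHS_int : Integrable
      (fun ω => (∑ i ∈ I ω, X i ω) + h (I ω) - ∑ i ∈ Probed ω, π i) P :=
    (hL1.add (integrable_comp_finset P I hIm h)).sub
      (integrable_comp_finset P Probed hPm (fun S => ∑ i ∈ S, π i))
  -- pointwise (a.e.) inequality against M + E
  have hpt : ∀ᵐ ω ∂P,
      (∑ i ∈ I ω, X i ω) + h (I ω) - ∑ i ∈ Probed ω, π i ≤ M ω + E ω := by
    filter_upwards [hfeas] with ω hω
    obtain ⟨hsub, hmem⟩ := hω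
    have hE_eq : E ω = ∑ i ∈ Probed ω, (g i ω - π i) := by
      rw [hE_def]
      simp only [hf_def]
      rw [Finset.sum_congr rfl (fun i _ => (ite_mul _ _ _ _))]
      simp only [one_mul, zero_mul]
      rw [Finset.sum_ite_mem, Finset.univ_inter]
    have hX_split : ∀ i, X i ω ≤ min (X i ω) (τ i) + g i ω := by
      intro i
      simp only [hg_def]
      rcases le_total (X i ω) (τ i) with hle | hle
      · rw [min_eq_left hle, max_eq_right (by linarith)]; simp
      · rw [min_eq_right hle, max_eq_left (by linarith)]; ring_nf; simp
    have h1 : (∑ i ∈ I ω, X i ω) ≤ (∑ i ∈ I ω, min (X i ω) (τ i)) + ∑ i ∈ I ω, g i ω := by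
      rw [← Finset.sum_add_distrib]
      exact Finset.sum_le_sum fun i _ => hX_split i
    have h2 : (∑ i ∈ I ω, g i ω) ≤ ∑ i ∈ Probed ω, g i ω :=
      Finset.sum_le_sum_of_subset_of_nonneg hsub fun i _ _ => le_max_right _ _
    have h3 : (∑ i ∈ I ω, min (X i ω) (τ i)) + h (I ω) ≤ M ω :=
      Finset.le_sup' (fun S => (∑ i ∈ S, min (X i ω) (τ i)) + h S) hmem
    have : E ω = (∑ i ∈ Probed ω, g i ω) - ∑ i ∈ Probed ω, π i := by
      rw [hE_eq, Finset.sum_sub_distrib]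
    linarith
  calc ∫ ω, ((∑ i ∈ I ω, X i ω) + h (I ω) - ∑ i ∈ Probed ω, π i) ∂P
      ≤ ∫ ω, (M ω + E ω) ∂P := integral_mono_ae hLHS_int (hM_int.add hE_int) hpt
    _ = ∫ ω, M ω ∂P + ∫ ω, E ω ∂P := integral_add hM_int hE_int
    _ = ∫ ω, M ω ∂P := by rw [hE_zero, add_zero]
end

section
/- Let V be a finite set, (Ω, P) a probability space, and for each i ∈ V let X_i be an integrable real random variable, π_i ≥ 0 a real number, and τ_i ∈ ℝ with E[(τ_i − X_i)⁺] = π_i. Let h : Finset V → ℝ be any function and let F' be a nonempty family of subsets of V. Let Probed, I : Ω → Finset V be measurable maps such that almost surely I(ω) ⊆ Probed(ω) and I(ω) ∈ F', and such that for every i ∈ V the indicator random variable ω ↦ 1[i ∈ Probed(ω)] is independent of X_i. Then E[ Σ_{i ∈ I(ω)} X_i(ω) + h(I(ω)) + Σ_{i ∈ Probed(ω)} π_i ] ≥ E[ min_{S ∈ F'} ( Σ_{i ∈ S} max(X_i(ω), τ_i) + h(S) ) ]. -/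
open MeasureTheory ProbabilityTheory

private lemma integrable_finset_inf' {Ω : Type*} [MeasurableSpace Ω] {P : Measure Ω}
    {α : Type*} (s : Finset α) (hs : s.Nonempty) (f : α → Ω → ℝ)
    (hf : ∀ a ∈ s, Integrable (f a) P) :
    Integrable (fun ω => s.inf' hs (fun a => f a ω)) P := by
  induction hs using Finset.Nonempty.cons_induction with
  | singleton a =>
      exact (hf a (Finset.mem_singleton_self a)).congr
        (Filter.Eventually.of_forall fun ω => (Finset.inf'_singleton (fun b => f b ω)).symm)
  | cons a t ha ht ih =>
      have h1 : Integrable (f a) P := hf a (Finset.mem_cons_self a t)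
      have h2 := ih (fun b hb => hf b (Finset.mem_cons_of_mem hb))
      refine (h1.inf h2).congr (Filter.Eventually.of_forall fun ω => ?_)
      exact (Finset.inf'_cons (H := ht) (fun b => f b ω) (hb := ha)).symm

theorem disutility_min_optimal_strategy_bound
    {V : Type*} [Fintype V] [DecidableEq V]
    {Ω : Type*} [MeasurableSpace Ω] (P : Measure Ω) [IsProbabilityMeasure P]
    (X : V → Ω → ℝ) (hX : ∀ i, Integrable (X i) P)
    (π τ : V → ℝ) (hπ : ∀ i, 0 ≤ π i)
    (hτ : ∀ i, ∫ ω, max (τ i - X i ω) 0 ∂P = π i)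
    (h : Finset V → ℝ)
    (F' : Finset (Finset V)) (hF' : F'.Nonempty)
    (Probed I : Ω → Finset V)
    (hPm : ∀ S : Finset V, MeasurableSet {ω | Probed ω = S})
    (hIm : ∀ S : Finset V, MeasurableSet {ω | I ω = S})
    (hfeas : ∀ᵐ ω ∂P, I ω ⊆ Probed ω ∧ I ω ∈ F')
    (hind : ∀ i, IndepFun (fun ω => if i ∈ Probed ω then (1 : ℝ) else 0) (X i) P) :
    ∫ ω, ((∑ i ∈ I ω, X i ω) + h (I ω) + ∑ i ∈ Probed ω, π i) ∂P
      ≥ ∫ ω, F'.inf' hF' (fun S => (∑ i ∈ S, max (X i ω) (τ i)) + h S) ∂P := by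
  classical
  set A : V → Ω → ℝ := fun i ω => if i ∈ Probed ω then (1 : ℝ) else 0 with hA
  set g : V → Ω → ℝ := fun i ω => max (τ i - X i ω) 0 with hg
  -- measurability of membership sets
  have hmemP : ∀ i, MeasurableSet {ω | i ∈ Probed ω} := by
    intro i
    have : {ω | i ∈ Probed ω} = ⋃ S ∈ {S : Finset V | i ∈ S}, {ω | Probed ω = S} := by
      ext ω; simp
    rw [this]
    exact MeasurableSet.biUnion (Set.to_countable _) (fun S _ => hPm S)
  have hmemI : ∀ i, MeasurableSet {ω | i ∈ I ω} := by
    intro i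
    have : {ω | i ∈ I ω} = ⋃ S ∈ {S : Finset V | i ∈ S}, {ω | I ω = S} := by
      ext ω; simp
    rw [this]
    exact MeasurableSet.biUnion (Set.to_countable _) (fun S _ => hIm S)
  have hAmeas : ∀ i, Measurable (A i) := fun i =>
    Measurable.ite (hmemP i) measurable_const measurable_const
  have hAint : ∀ i, Integrable (A i) P := by
    intro i
    refine (integrable_const (1 : ℝ)).mono' (hAmeas i).aestronglyMeasurable ?_
    filter_upwards with ω
    simp only [hA]
    split <;> simp
  have hgint : ∀ i, Integrable (g i) P := fun i =>
    ((integrable_const (τ i)).sub (hX i)).pos_part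
  have hg0 : ∀ i ω, 0 ≤ g i ω := fun i ω => le_max_right _ _
  have hAgint : ∀ i, Integrable (fun ω => A i ω * g i ω) P := by
    intro i
    refine (hgint i).mono'
      (((hAmeas i).aestronglyMeasurable).mul (hgint i).aestronglyMeasurable) ?_
    filter_upwards with ω
    have hAb : |A i ω| ≤ 1 := by simp only [hA]; split <;> simp
    calc ‖A i ω * g i ω‖ = |A i ω| * |g i ω| := by rw [Real.norm_eq_abs, abs_mul]
      _ ≤ 1 * |g i ω| := mul_le_mul_of_nonneg_right hAb (abs_nonneg _)
      _ = g i ω := by rw [one_mul, abs_of_nonneg (hg0 i ω)]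
  -- integrability of pieces of the LHS
  have hIXeq : (fun ω => ∑ i ∈ I ω, X i ω)
      = fun ω => ∑ i : V, Set.indicator {ω' | i ∈ I ω'} (X i) ω := by
    funext ω
    simp only [Set.indicator_apply, Set.mem_setOf_eq, Finset.sum_ite_mem, Finset.univ_inter]
  have hIXint : Integrable (fun ω => ∑ i ∈ I ω, X i ω) P := by
    rw [hIXeq]
    exact integrable_finset_sum _ (fun i _ => (hX i).indicator (hmemI i))
  have hhIeq : (fun ω => h (I ω)) = fun ω => ∑ S : Finset V, if I ω = S then h S else 0 := by
    funext ω
    simp [Finset.sum_ite_eq]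
  have hhIint : Integrable (fun ω => h (I ω)) P := by
    rw [hhIeq]
    refine integrable_finset_sum _ (fun S _ => ?_)
    refine (integrable_const |h S|).mono'
      ((Measurable.ite (hIm S) measurable_const measurable_const).aestronglyMeasurable) ?_
    filter_upwards with ω
    split <;> simp [Real.norm_eq_abs, le_abs_self, abs_nonneg]
  have hPπeq : (fun ω => ∑ i ∈ Probed ω, π i) = fun ω => ∑ i : V, A i ω * π i := by
    funext ω
    simp only [hA, ite_mul, one_mul, zero_mul, Finset.sum_ite_mem, Finset.univ_inter]
  have hPπint : Integrable (fun ω => ∑ i ∈ Probed ω, π i) P := by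
    rw [hPπeq]
    exact integrable_finset_sum _ (fun i _ => (hAint i).mul_const _)
  -- the comparison function
  set C : Ω → ℝ := fun ω => ((∑ i ∈ I ω, X i ω) + h (I ω)) + ∑ i : V, A i ω * g i ω with hC
  have hCint : Integrable C P :=
    (hIXint.add hhIint).add (integrable_finset_sum _ (fun i _ => hAgint i))
  -- max identity
  have hmax : ∀ i ω, max (X i ω) (τ i) = X i ω + g i ω := by
    intro i ω
    simp only [hg]
    rcases le_total (X i ω) (τ i) with hle | hle
    · rw [max_eq_right hle, max_eq_left (sub_nonneg.mpr hle)]; ring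
    · rw [max_eq_left hle, max_eq_right (sub_nonpos.mpr hle)]; ring
  -- RHS integrand integrable
  have hRint : Integrable
      (fun ω => F'.inf' hF' (fun S => (∑ i ∈ S, max (X i ω) (τ i)) + h S)) P := by
    refine integrable_finset_inf' F' hF' _ (fun S _ => ?_)
    have hsum : Integrable (fun ω => ∑ i ∈ S, max (X i ω) (τ i)) P := by
      refine integrable_finset_sum _ (fun i _ => ?_)
      have : (fun ω => max (X i ω) (τ i)) = fun ω => X i ω + g i ω := funext (hmax i)
      rw [this]
      exact (hX i).add (hgint i)
    exact hsum.add (integrable_const (h S))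
  -- pointwise a.e. bound
  have hpt : ∀ᵐ ω ∂P,
      F'.inf' hF' (fun S => (∑ i ∈ S, max (X i ω) (τ i)) + h S) ≤ C ω := by
    filter_upwards [hfeas] with ω hω
    have h1 : F'.inf' hF' (fun S => (∑ i ∈ S, max (X i ω) (τ i)) + h S)
        ≤ (∑ i ∈ I ω, max (X i ω) (τ i)) + h (I ω) := Finset.inf'_le _ hω.2
    have h2 : (∑ i ∈ I ω, max (X i ω) (τ i))
        = (∑ i ∈ I ω, X i ω) + ∑ i ∈ I ω, g i ω := by
      rw [← Finset.sum_add_distrib]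
      exact Finset.sum_congr rfl (fun i _ => hmax i ω)
    have h3 : ∑ i ∈ I ω, g i ω ≤ ∑ i ∈ Probed ω, g i ω :=
      Finset.sum_le_sum_of_subset_of_nonneg hω.1 (fun i _ _ => hg0 i ω)
    have h4 : ∑ i ∈ Probed ω, g i ω = ∑ i : V, A i ω * g i ω := by
      simp only [hA, ite_mul, one_mul, zero_mul, Finset.sum_ite_mem, Finset.univ_inter]
    have h5 : ∑ i ∈ I ω, g i ω ≤ ∑ i : V, A i ω * g i ω := h4 ▸ h3
    calc F'.inf' hF' (fun S => (∑ i ∈ S, max (X i ω) (τ i)) + h S)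
        ≤ (∑ i ∈ I ω, max (X i ω) (τ i)) + h (I ω) := h1
      _ = (∑ i ∈ I ω, X i ω) + (∑ i ∈ I ω, g i ω) + h (I ω) := by rw [h2]
      _ ≤ ((∑ i ∈ I ω, X i ω) + h (I ω)) + ∑ i : V, A i ω * g i ω := by linarith
      _ = C ω := rfl
  have step1 : ∫ ω, F'.inf' hF' (fun S => (∑ i ∈ S, max (X i ω) (τ i)) + h S) ∂P
      ≤ ∫ ω, C ω ∂P := integral_mono_ae hRint hCint hpt
  -- key independence computation
  have hkey : ∀ i, ∫ ω, A i ω * g i ω ∂P = (∫ ω, A i ω ∂P) * π i := by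
    intro i
    have hindep : IndepFun (A i) (g i) P := by
      have hψ : Measurable (fun x : ℝ => max (τ i - x) 0) :=
        (measurable_const.sub measurable_id).max measurable_const
      have := (hind i).comp measurable_id hψ
      exact this
    have hmul := hindep.integral_mul_eq_mul_integral (hAint i).1 (hgint i).1
    calc ∫ ω, A i ω * g i ω ∂P = ∫ ω, (A i * g i) ω ∂P := rfl
      _ = (∫ ω, A i ω ∂P) * (∫ ω, g i ω ∂P) := hmul
      _ = (∫ ω, A i ω ∂P) * π i := by rw [show (∫ ω, g i ω ∂P) = π i from hτ i]
  -- compute ∫ C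
  have hG : ∫ ω, (∑ i : V, A i ω * g i ω) ∂P = ∫ ω, (∑ i ∈ Probed ω, π i) ∂P := by
    rw [integral_finset_sum _ (fun i _ => hAgint i), hPπeq,
      integral_finset_sum _ (fun i _ => (hAint i).mul_const _)]
    refine Finset.sum_congr rfl (fun i _ => ?_)
    rw [hkey i, integral_mul_const]
  have h₁ : Integrable (fun ω => (∑ i ∈ I ω, X i ω) + h (I ω)) P := hIXint.add hhIint
  have h₂ : Integrable (fun ω => ∑ i : V, A i ω * g i ω) P :=
    integrable_finset_sum _ (fun i _ => hAgint i)
  have hCval : ∫ ω, C ω ∂P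
      = ∫ ω, ((∑ i ∈ I ω, X i ω) + h (I ω)) ∂P + ∫ ω, (∑ i ∈ Probed ω, π i) ∂P := by
    calc ∫ ω, C ω ∂P
        = ∫ ω, (((∑ i ∈ I ω, X i ω) + h (I ω)) + ∑ i : V, A i ω * g i ω) ∂P := rfl
      _ = (∫ ω, ((∑ i ∈ I ω, X i ω) + h (I ω)) ∂P)
            + ∫ ω, (∑ i : V, A i ω * g i ω) ∂P := integral_add h₁ h₂
      _ = _ := by rw [hG]
  have hLHS : ∫ ω, ((∑ i ∈ I ω, X i ω) + h (I ω) + ∑ i ∈ Probed ω, π i) ∂P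
      = ∫ ω, ((∑ i ∈ I ω, X i ω) + h (I ω)) ∂P + ∫ ω, (∑ i ∈ Probed ω, π i) ∂P :=
    integral_add h₁ hPπint
  rw [ge_iff_le, hLHS, ← hCval]
  exact step1
end

section
/- Let V be a finite set, (Ω, P) a probability space, and for each i ∈ V let X_i be an integrable real random variable with X_i ≥ 0 almost surely, π_i ≥ 0 a real number, and τ_i ∈ ℝ with E[(X_i − τ_i)⁺] = π_i. Let Probed, I : Ω → Finset V be measurable maps such that almost surely I(ω) ⊆ Probed(ω) and |I(ω)| ≤ 1, and such that for every i ∈ V the indicator random variable ω ↦ 1[i ∈ Probed(ω)] is independent of X_i. Then E[ Σ_{i ∈ I(ω)} X_i(ω) − Σ_{i ∈ Probed(ω)} π_i ] ≤ E[ max( 0, max_{i ∈ Probed(ω)} min(X_i(ω), τ_i) ) ]. -/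
open MeasureTheory ProbabilityTheory

theorem constrained_utility_max_bound
    {V : Type*} [Fintype V] [DecidableEq V]
    {Ω : Type*} [MeasurableSpace Ω] (P : Measure Ω) [IsProbabilityMeasure P]
    (X : V → Ω → ℝ) (hX : ∀ i, Integrable (X i) P)
    (hX0 : ∀ i, ∀ᵐ ω ∂P, 0 ≤ X i ω)
    (π τ : V → ℝ) (hπ : ∀ i, 0 ≤ π i)
    (hτ : ∀ i, ∫ ω, max (X i ω - τ i) 0 ∂P = π i)
    (Probed I : Ω → Finset V)
    (hPm : ∀ S : Finset V, MeasurableSet {ω | Probed ω = S})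
    (hIm : ∀ S : Finset V, MeasurableSet {ω | I ω = S})
    (hfeas : ∀ᵐ ω ∂P, I ω ⊆ Probed ω ∧ (I ω).card ≤ 1)
    (hind : ∀ i, IndepFun (fun ω => if i ∈ Probed ω then (1 : ℝ) else 0) (X i) P) :
    ∫ ω, ((∑ i ∈ I ω, X i ω) - ∑ i ∈ Probed ω, π i) ∂P
      ≤ ∫ ω, (Probed ω).fold max 0 (fun i => min (X i ω) (τ i)) ∂P := by
  classical
  set g : V → Ω → ℝ := fun i ω => max (X i ω - τ i) 0 with hg_def
  set F : Ω → ℝ := fun ω => (Probed ω).fold max 0 (fun i => min (X i ω) (τ i)) with hF_def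
  -- measurability of membership indicators
  have hPmem : ∀ i, MeasurableSet {ω | i ∈ Probed ω} := by
    intro i
    have h : {ω | i ∈ Probed ω} = ⋃ (S : Finset V), ⋃ (_ : i ∈ S), {ω | Probed ω = S} := by
      ext ω; simp [eq_comm]
    rw [h]
    exact MeasurableSet.iUnion fun S => MeasurableSet.iUnion fun _ => hPm S
  have hImem : ∀ i, MeasurableSet {ω | i ∈ I ω} := by
    intro i
    have h : {ω | i ∈ I ω} = ⋃ (S : Finset V), ⋃ (_ : i ∈ S), {ω | I ω = S} := by
      ext ω; simp [eq_comm]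
    rw [h]
    exact MeasurableSet.iUnion fun S => MeasurableSet.iUnion fun _ => hIm S
  have hindm : ∀ i, Measurable (fun ω => if i ∈ Probed ω then (1:ℝ) else 0) :=
    fun i => Measurable.ite (hPmem i) measurable_const measurable_const
  have hindIm : ∀ i, Measurable (fun ω => if i ∈ I ω then (1:ℝ) else 0) :=
    fun i => Measurable.ite (hImem i) measurable_const measurable_const
  -- integrability of g i
  have hgInt : ∀ i, Integrable (g i) P := fun i =>
    ((hX i).sub (integrable_const (τ i))).pos_part
  have hminInt : ∀ i, Integrable (fun ω => min (X i ω) (τ i)) P := by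
    intro i
    have h : (fun ω => min (X i ω) (τ i)) = fun ω => X i ω - g i ω := by
      funext ω
      rcases le_total (X i ω) (τ i) with h | h
      · simp [hg_def, min_eq_left h, max_eq_right (sub_nonpos.2 h)]
      · simp [hg_def, min_eq_right h, max_eq_left (sub_nonneg.2 h)]
    rw [h]; exact (hX i).sub (hgInt i)
  -- integrability of fixed-set folds
  have hfoldInt : ∀ S : Finset V,
      Integrable (fun ω => S.fold max 0 (fun i => min (X i ω) (τ i))) P := by
    intro S
    induction S using Finset.induction_on with
    | empty => simp only [Finset.fold_empty]; exact integrable_const 0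
    | @insert a S ha ih =>
        simp only [Finset.fold_insert ha]
        exact (hminInt a).sup ih
  -- integrability of F
  have hFInt : Integrable F P := by
    have hFeq : F = fun ω => ∑ S : Finset V,
        Set.indicator {ω' | Probed ω' = S}
          (fun ω' => S.fold max 0 (fun i => min (X i ω') (τ i))) ω := by
      funext ω
      simp only [Set.indicator_apply, Set.mem_setOf_eq, Finset.sum_ite_eq, Finset.mem_univ,
        if_true, hF_def]
    rw [hFeq]
    exact integrable_finset_sum _ fun S _ => (hfoldInt S).indicator (hPm S)
  -- integrability of the selected-sum and prices-sum
  have hf1Int : Integrable (fun ω => ∑ i : V, (if i ∈ I ω then (1:ℝ) else 0) * X i ω) P := by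
    refine integrable_finset_sum _ fun i _ => ?_
    exact (hX i).bdd_mul (hindIm i).aestronglyMeasurable
      (c := 1) (Filter.Eventually.of_forall fun ω => by dsimp; split <;> simp)
  have hf2Int : Integrable (fun ω => ∑ i : V, (if i ∈ Probed ω then (1:ℝ) else 0) * π i) P := by
    refine integrable_finset_sum _ fun i _ => ?_
    exact (integrable_const (π i)).bdd_mul (hindm i).aestronglyMeasurable
      (c := 1) (Filter.Eventually.of_forall fun ω => by dsimp; split <;> simp)
  have hRInt : ∀ i, Integrable
      (fun ω => (if i ∈ Probed ω then (1:ℝ) else 0) * (g i ω - π i)) P := fun i =>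
    ((hgInt i).sub (integrable_const (π i))).bdd_mul (hindm i).aestronglyMeasurable
      (c := 1) (Filter.Eventually.of_forall fun ω => by dsimp; split <;> simp)
  set R : Ω → ℝ := fun ω => ∑ i : V, (if i ∈ Probed ω then (1:ℝ) else 0) * (g i ω - π i)
    with hR_def
  have hRInt' : Integrable R P := integrable_finset_sum _ fun i _ => hRInt i
  -- rewrite the random-set sums via indicators over V
  have hrew : ∀ ω, ((∑ i ∈ I ω, X i ω) - ∑ i ∈ Probed ω, π i)
      = (∑ i : V, (if i ∈ I ω then (1:ℝ) else 0) * X i ω)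
        - ∑ i : V, (if i ∈ Probed ω then (1:ℝ) else 0) * π i := by
    intro ω
    simp only [ite_mul, one_mul, zero_mul, Finset.sum_ite_mem, Finset.univ_inter]
  -- pointwise bound
  have hpt : ∀ᵐ ω ∂P, ((∑ i ∈ I ω, X i ω) - ∑ i ∈ Probed ω, π i) ≤ F ω + R ω := by
    filter_upwards [hfeas, ae_all_iff.2 hX0] with ω hfe hX0ω
    have hRω : R ω = (∑ i ∈ Probed ω, g i ω) - ∑ i ∈ Probed ω, π i := by
      simp only [hR_def, ite_mul, one_mul, zero_mul, Finset.sum_ite_mem, Finset.univ_inter,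
        Finset.sum_sub_distrib]
    rw [hRω]
    have hF0 : (0:ℝ) ≤ F ω := (Finset.le_fold_max _).2 (Or.inl le_rfl)
    have hg0 : ∀ i, 0 ≤ g i ω := fun i => le_max_right _ _
    rcases (I ω).eq_empty_or_nonempty with h0 | ⟨a, haI⟩
    · rw [h0]
      simp only [Finset.sum_empty]
      have : 0 ≤ F ω + ∑ i ∈ Probed ω, g i ω :=
        add_nonneg hF0 (Finset.sum_nonneg fun i _ => hg0 i)
      linarith
    · have h1 : I ω = {a} := Finset.eq_singleton_iff_unique_mem.2
        ⟨haI, fun b hb => Finset.card_le_one.1 hfe.2 b hb a haI⟩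
      rw [h1, Finset.sum_singleton]
      have haP : a ∈ Probed ω := hfe.1 haI
      have hXa : X a ω = min (X a ω) (τ a) + g a ω := by
        rcases le_total (X a ω) (τ a) with h | h
        · simp [hg_def, min_eq_left h, max_eq_right (sub_nonpos.2 h)]
        · simp [hg_def, min_eq_right h, max_eq_left (sub_nonneg.2 h)]
      have h1' : min (X a ω) (τ a) ≤ F ω :=
        (Finset.le_fold_max _).2 (Or.inr ⟨a, haP, le_rfl⟩)
      have h2' : g a ω ≤ ∑ i ∈ Probed ω, g i ω :=
        Finset.single_le_sum (fun i _ => hg0 i) haP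
      linarith
  -- expectation of R is zero
  have hRzero : ∫ ω, R ω ∂P = 0 := by
    rw [integral_finset_sum _ fun i _ => hRInt i]
    refine Finset.sum_eq_zero fun i _ => ?_
    have hmψ : Measurable (fun x : ℝ => max (x - τ i) 0 - π i) :=
      ((measurable_id.sub measurable_const).max measurable_const).sub measurable_const
    have hcomp : IndepFun (fun ω => if i ∈ Probed ω then (1:ℝ) else 0)
        (fun ω => g i ω - π i) P := (hind i).comp measurable_id hmψ
    rw [hcomp.integral_fun_mul_eq_mul_integral (hindm i).aestronglyMeasurable
      ((hgInt i).sub (integrable_const (π i))).aestronglyMeasurable]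
    have hz : ∫ ω, (g i ω - π i) ∂P = 0 := by
      rw [integral_sub (hgInt i) (integrable_const (π i)), integral_const]
      simp [hg_def, hτ i]
    rw [hz, mul_zero]
  have hLInt : Integrable (fun ω => (∑ i ∈ I ω, X i ω) - ∑ i ∈ Probed ω, π i) P :=
    (hf1Int.sub hf2Int).congr (Filter.Eventually.of_forall fun ω => (hrew ω).symm)
  calc ∫ ω, ((∑ i ∈ I ω, X i ω) - ∑ i ∈ Probed ω, π i) ∂P
      ≤ ∫ ω, (F ω + R ω) ∂P := integral_mono_ae hLInt (hFInt.add hRInt') hpt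
    _ = ∫ ω, F ω ∂P + ∫ ω, R ω ∂P := integral_add hFInt hRInt'
    _ = ∫ ω, F ω ∂P := by rw [hRzero, add_zero]
end

section
/- Let n be a natural number and let X_0, …, X_{n−1} be mutually independent integrable real random variables on a probability space (Ω, P), each nonnegative almost surely. For each i let π_i > 0 with π_i ≤ E[X_i], and let τ_i ∈ ℝ satisfy E[(X_i − τ_i)⁺] = π_i (so τ_i ≥ 0); assume the indices are sorted so that τ_i ≥ τ_j whenever i ≤ j. For ω ∈ Ω define Probed(ω) = { i : max(0, max_{j < i} X_j(ω)) < τ_i } and define the utility U(ω) = max(0, max_{i ∈ Probed(ω)} X_i(ω)) − Σ_{i ∈ Probed(ω)} π_i (maxima over the empty set are 0). Then E[U] = E[ max(0, max_{0 ≤ i < n} min(X_i(ω), τ_i)) ]. -/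
open MeasureTheory ProbabilityTheory Finset

section helpers
variable {ι : Type*}

lemma zero_le_foldmax (s : Finset ι) (f : ι → ℝ) : 0 ≤ s.fold max 0 f :=
  (Finset.le_fold_max 0).mpr (Or.inl le_rfl)

lemma le_foldmax_of_mem {s : Finset ι} {f : ι → ℝ} {i : ι} (hi : i ∈ s) :
    f i ≤ s.fold max 0 f :=
  (Finset.le_fold_max _).mpr (Or.inr ⟨i, hi, le_rfl⟩)

lemma foldmax_le {s : Finset ι} {f : ι → ℝ} {c : ℝ} (h0 : 0 ≤ c)
    (h : ∀ i ∈ s, f i ≤ c) : s.fold max 0 f ≤ c :=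
  (Finset.fold_max_le c).mpr ⟨h0, h⟩

lemma foldmax_mono {s t : Finset ι} (h : s ⊆ t) (f : ι → ℝ) :
    s.fold max 0 f ≤ t.fold max 0 f :=
  foldmax_le (zero_le_foldmax t f) (fun i hi => le_foldmax_of_mem (h hi))

lemma measurable_foldmax {Ω : Type*} [MeasurableSpace Ω] (s : Finset ι) (f : ι → Ω → ℝ)
    (hf : ∀ i ∈ s, Measurable (f i)) :
    Measurable (fun ω => s.fold max 0 (fun i => f i ω)) := by
  classical
  induction s using Finset.induction_on with
  | empty => simpa using measurable_const
  | @insert a s ha ih =>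
    simp only [Finset.fold_insert ha]
    exact (hf a (Finset.mem_insert_self a s)).max
      (ih (fun i hi => hf i (Finset.mem_insert_of_mem hi)))

lemma foldmax_univ_subtype (s : Finset ι) (f : ι → ℝ) :
    (Finset.univ : Finset ↥s).fold max 0 (fun j : ↥s => f j.1) = s.fold max 0 f := by
  apply le_antisymm
  · exact foldmax_le (zero_le_foldmax _ _) (fun j _ => le_foldmax_of_mem j.2)
  · exact foldmax_le (zero_le_foldmax _ _)
      (fun j hj => le_foldmax_of_mem (s := (Finset.univ : Finset ↥s))
        (f := fun j : ↥s => f j.1) (i := ⟨j, hj⟩) (Finset.mem_univ _))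

end helpers

open Finset in
lemma pointwise_key (n : ℕ) (x t : Fin n → ℝ) (hx : ∀ i, 0 ≤ x i) (ht0 : ∀ i, 0 ≤ t i)
    (hs : ∀ i j : Fin n, i ≤ j → t j ≤ t i) :
    (Finset.univ.filter
        (fun i => (Finset.univ.filter (fun j => j < i)).fold max 0 x < t i)).fold max 0 x
      - ∑ i ∈ Finset.univ.filter
          (fun i => (Finset.univ.filter (fun j => j < i)).fold max 0 x < t i),
          max (x i - t i) 0
    = Finset.univ.fold max 0 (fun i => min (x i) (t i)) := by
  classical
  set M : Fin n → ℝ := fun i => (Finset.univ.filter (fun j => j < i)).fold max 0 x with hM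
  set S : Finset (Fin n) := Finset.univ.filter (fun i => M i < t i) with hS
  have hmemS : ∀ i, i ∈ S ↔ M i < t i := by
    intro i; simp [hS]
  have hMmono : ∀ i j : Fin n, i ≤ j → M i ≤ M j := by
    intro i j hij
    exact foldmax_mono (fun k hk => by
      simp only [Finset.mem_filter, Finset.mem_univ, true_and] at hk ⊢
      exact lt_of_lt_of_le hk hij) x
  have hxM : ∀ j i : Fin n, j < i → x j ≤ M i := by
    intro j i hji
    exact le_foldmax_of_mem (by simp [hji])
  by_cases hB : ∃ i ∈ S, t i < x i
  · obtain ⟨i₀, hi₀S, hi₀⟩ := hB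
    have hMi₀ : M i₀ < t i₀ := (hmemS i₀).mp hi₀S
    -- every element of S is ≤ i₀
    have hle : ∀ j ∈ S, j ≤ i₀ := by
      intro j hj
      by_contra hc
      push_neg at hc
      have h1 : x i₀ ≤ M j := hxM i₀ j hc
      have h2 : M j < t j := (hmemS j).mp hj
      have h3 : t j ≤ t i₀ := hs i₀ j (le_of_lt hc)
      linarith
    have hxlt : ∀ j ∈ S, j ≠ i₀ → x j < t i₀ := by
      intro j hj hne
      have hji : j < i₀ := lt_of_le_of_ne (hle j hj) hne
      exact lt_of_le_of_lt (hxM j i₀ hji) hMi₀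
    have hsum : ∑ i ∈ S, max (x i - t i) 0 = x i₀ - t i₀ := by
      rw [Finset.sum_eq_single i₀]
      · exact max_eq_left (by linarith)
      · intro j hj hne
        have h1 : x j < t i₀ := hxlt j hj hne
        have h2 : t i₀ ≤ t j := by
          rcases lt_or_eq_of_le (hle j hj) with h | h
          · exact hs j i₀ (le_of_lt h)
          · exact h ▸ le_rfl
        exact max_eq_right (by linarith)
      · intro h; exact absurd hi₀S h
    have hfoldS : S.fold max 0 x = x i₀ := by
      apply le_antisymm
      · refine foldmax_le (hx i₀) (fun j hj => ?_)
        by_cases hne : j = i₀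
        · exact hne ▸ le_rfl
        · have := hxlt j hj hne; linarith
      · exact le_foldmax_of_mem hi₀S
    have hfoldU : Finset.univ.fold max 0 (fun i => min (x i) (t i)) = t i₀ := by
      apply le_antisymm
      · refine foldmax_le (ht0 i₀) (fun j _ => ?_)
        rcases le_or_gt j i₀ with h | h
        · rcases lt_or_eq_of_le h with h' | h'
          · have hjS : j ∈ S := by
              rw [hmemS]
              have h1 : M j ≤ M i₀ := hMmono j i₀ h
              have h2 : t i₀ ≤ t j := hs j i₀ h
              linarith
            have := hxlt j hjS (ne_of_lt h')
            exact le_trans (min_le_left _ _) (le_of_lt this)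
          · subst h'; exact le_trans (min_le_right _ _) le_rfl
        · exact le_trans (min_le_right _ _) (hs i₀ j (le_of_lt h))
      · have : min (x i₀) (t i₀) = t i₀ := min_eq_right (le_of_lt hi₀)
        calc t i₀ = min (x i₀) (t i₀) := this.symm
          _ ≤ _ := le_foldmax_of_mem (f := fun i => min (x i) (t i)) (Finset.mem_univ i₀)
    rw [hsum, hfoldS, hfoldU]; ring
  · push_neg at hB
    have hsum : ∑ i ∈ S, max (x i - t i) 0 = 0 :=
      Finset.sum_eq_zero (fun i hi => max_eq_right (by linarith [hB i hi]))
    rw [hsum, sub_zero]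
    apply le_antisymm
    · refine foldmax_le (zero_le_foldmax _ _) (fun i hi => ?_)
      calc x i = min (x i) (t i) := (min_eq_left (hB i hi)).symm
        _ ≤ _ := le_foldmax_of_mem (f := fun i => min (x i) (t i)) (Finset.mem_univ i)
    · refine foldmax_le (zero_le_foldmax _ _) (fun i _ => ?_)
      by_cases hiS : i ∈ S
      · exact le_trans (min_le_left _ _) (le_foldmax_of_mem hiS)
      · -- there is a minimal element not in S
        have hne : (Finset.univ.filter (fun k => k ∉ S)).Nonempty := ⟨i, by simp [hiS]⟩
        set i₁ := (Finset.univ.filter (fun k => k ∉ S)).min' hne with hi₁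
        have hi₁mem : i₁ ∈ Finset.univ.filter (fun k => k ∉ S) := Finset.min'_mem _ hne
        have hi₁nS : i₁ ∉ S := by simpa using hi₁mem
        have hi₁le : i₁ ≤ i := Finset.min'_le _ i (by simp [hiS])
        have hMS : M i₁ ≤ S.fold max 0 x := by
          refine foldmax_le (zero_le_foldmax _ _) (fun j hj => ?_)
          simp only [Finset.mem_filter, Finset.mem_univ, true_and] at hj
          have hjS : j ∈ S := by
            by_contra hc
            have := Finset.min'_le (Finset.univ.filter (fun k => k ∉ S)) j (by simp [hc])
            exact absurd hj (not_lt.mpr this)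
          exact le_foldmax_of_mem hjS
        have h1 : t i₁ ≤ M i₁ := not_lt.mp (fun hc => hi₁nS ((hmemS i₁).mpr hc))
        have h2 : t i ≤ t i₁ := hs i₁ i hi₁le
        exact le_trans (min_le_right _ _) (le_trans h2 (le_trans h1 hMS))

theorem weitzman_index_policy_value
    {Ω : Type*} [MeasurableSpace Ω] (P : Measure Ω) [IsProbabilityMeasure P]
    (n : ℕ) (X : Fin n → Ω → ℝ)
    (hXm : ∀ i, Measurable (X i)) (hX : ∀ i, Integrable (X i) P)
    (hX0 : ∀ i, ∀ᵐ ω ∂P, 0 ≤ X i ω)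
    (hindep : iIndepFun X P)
    (π τ : Fin n → ℝ) (hπ : ∀ i, 0 < π i) (hπE : ∀ i, π i ≤ ∫ ω, X i ω ∂P)
    (hτ : ∀ i, ∫ ω, max (X i ω - τ i) 0 ∂P = π i)
    (hsorted : ∀ i j : Fin n, i ≤ j → τ j ≤ τ i)
    (Probed : Ω → Finset (Fin n))
    (hProbed : ∀ ω, ∀ i : Fin n, i ∈ Probed ω ↔
        (Finset.univ.filter (fun j => j < i)).fold max 0 (fun j => X j ω) < τ i) :
    ∫ ω, ((Probed ω).fold max 0 (fun i => X i ω) - ∑ i ∈ Probed ω, π i) ∂P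
      = ∫ ω, Finset.univ.fold max 0 (fun i => min (X i ω) (τ i)) ∂P := by
  classical
  -- Step 0 : the grades are nonnegative
  have hτ0 : ∀ i, 0 ≤ τ i := by
    intro i
    by_contra hc
    push_neg at hc
    have hae : (fun ω => max (X i ω - τ i) 0) =ᵐ[P] fun ω => X i ω - τ i := by
      filter_upwards [hX0 i] with ω hω
      exact max_eq_left (by linarith)
    have h1 : π i = ∫ ω, (X i ω - τ i) ∂P := by
      rw [← hτ i]; exact integral_congr_ae hae
    rw [integral_sub (hX i) (integrable_const _), integral_const] at h1
    simp only [probReal_univ, ENNReal.toReal_one, smul_eq_mul, one_mul] at h1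
    have := hπE i
    linarith
  -- Notation
  have hMm : ∀ i : Fin n, Measurable (fun ω =>
      (Finset.univ.filter (fun j => j < i)).fold max 0 (fun j => X j ω)) :=
    fun i => measurable_foldmax _ _ (fun j _ => hXm j)
  set C : Fin n → Set Ω := fun i =>
    {ω | (Finset.univ.filter (fun j => j < i)).fold max 0 (fun j => X j ω) < τ i} with hCdef
  have hCm : ∀ i, MeasurableSet (C i) := fun i => measurableSet_lt (hMm i) measurable_const
  have hCmem : ∀ ω i, ω ∈ C i ↔
      (Finset.univ.filter (fun j => j < i)).fold max 0 (fun j => X j ω) < τ i := by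
    intro ω i; rw [hCdef]; exact Iff.rfl
  have hProbedEq : ∀ ω, Probed ω = Finset.univ.filter (fun i => ω ∈ C i) := by
    intro ω; ext i
    simp only [Finset.mem_filter, Finset.mem_univ, true_and]
    rw [hProbed ω i, hCmem ω i]
  set Q : Fin n → Ω → ℝ := fun i ω => max (X i ω - τ i) 0 with hQdef
  have hQm : ∀ i, Measurable (Q i) := fun i => ((hXm i).sub measurable_const).max measurable_const
  have hQint : ∀ i, Integrable (Q i) P := fun i => ((hX i).sub (integrable_const _)).pos_part
  set G : Ω → ℝ := fun ω => Finset.univ.fold max 0 (fun i => if ω ∈ C i then X i ω else 0)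
    with hGdef
  have hGfold : ∀ ω, (Probed ω).fold max 0 (fun i => X i ω) = G ω := by
    intro ω
    rw [hProbedEq ω]
    apply le_antisymm
    · refine foldmax_le (zero_le_foldmax _ _) (fun i hi => ?_)
      simp only [Finset.mem_filter, Finset.mem_univ, true_and] at hi
      calc X i ω = (if ω ∈ C i then X i ω else 0) := (if_pos hi).symm
        _ ≤ G ω := le_foldmax_of_mem
            (f := fun i => if ω ∈ C i then X i ω else 0) (Finset.mem_univ i)
    · refine foldmax_le (zero_le_foldmax _ _) (fun i _ => ?_)
      by_cases h : ω ∈ C i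
      · rw [if_pos h]
        exact le_foldmax_of_mem (s := Finset.univ.filter (fun i => ω ∈ C i)) (f := fun i => X i ω) (Finset.mem_filter.mpr ⟨Finset.mem_univ i, h⟩)
      · rw [if_neg h]; exact zero_le_foldmax _ _
  have hGm : Measurable G :=
    measurable_foldmax _ _ (fun i _ => Measurable.ite (hCm i) (hXm i) measurable_const)
  have hGint : Integrable G P := by
    refine Integrable.mono (integrable_finset_sum Finset.univ (fun i _ => (hX i).abs))
      hGm.aestronglyMeasurable (Filter.Eventually.of_forall (fun ω => ?_))
    have h0 : 0 ≤ G ω := zero_le_foldmax _ _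
    have hub : G ω ≤ ∑ i, |X i ω| := by
      refine foldmax_le (Finset.sum_nonneg fun i _ => abs_nonneg _) (fun i _ => ?_)
      have h1 : (if ω ∈ C i then X i ω else 0) ≤ |X i ω| := by
        by_cases h : ω ∈ C i
        · rw [if_pos h]; exact le_abs_self _
        · rw [if_neg h]; exact abs_nonneg _
      exact le_trans h1 (Finset.single_le_sum (f := fun j => |X j ω|) (fun j _ => abs_nonneg _) (Finset.mem_univ i))
    rw [Real.norm_eq_abs, Real.norm_eq_abs, abs_of_nonneg h0]
    exact le_trans hub (le_abs_self _)
  -- Step 1 : for each box, E[1_{probed i} * π i] = E[1_{probed i} * (X i - τ i)⁺]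
  have hkey : ∀ i, ∫ ω, (C i).indicator (Q i) ω ∂P
      = ∫ ω, (C i).indicator (fun _ => π i) ω ∂P := by
    intro i
    have hdisj : Disjoint (Finset.univ.filter (fun j => j < i)) ({i} : Finset (Fin n)) :=
      Finset.disjoint_singleton_right.mpr (by simp)
    have hIF := hindep.indepFun_finset (Finset.univ.filter (fun j => j < i)) {i} hdisj hXm
    set S : Finset (Fin n) := Finset.univ.filter (fun j => j < i) with hSdef
    set φ : (↥S → ℝ) → ℝ := fun y =>
      if (Finset.univ : Finset ↥S).fold max 0 (fun j : ↥S => y j) < τ i then 1 else 0 with hφdef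
    have hφm : Measurable φ :=
      Measurable.ite (measurableSet_lt
        (measurable_foldmax _ _ (fun j _ => measurable_pi_apply j)) measurable_const)
        measurable_const measurable_const
    set ψ : (↥({i} : Finset (Fin n)) → ℝ) → ℝ := fun y =>
      max (y ⟨i, Finset.mem_singleton_self i⟩ - τ i) 0 with hψdef
    have hψm : Measurable ψ := ((measurable_pi_apply _).sub measurable_const).max measurable_const
    have hIF2 := hIF.comp hφm hψm
    have heq1 : (φ ∘ fun ω (j : ↥S) => X j ω) = fun ω => if ω ∈ C i then (1:ℝ) else 0 := by
      funext ω
      simp only [Function.comp_apply, hφdef]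
      have h1 : (Finset.univ : Finset ↥S).fold max 0 (fun j : ↥S => X j.1 ω)
          = S.fold max 0 (fun j => X j ω) := foldmax_univ_subtype S (fun j => X j ω)
      rw [h1]
      by_cases h : ω ∈ C i
      · rw [if_pos ((hCmem ω i).mp h), if_pos h]
      · rw [if_neg (fun hh => h ((hCmem ω i).mpr hh)), if_neg h]
    have heq2 : (ψ ∘ fun ω (j : ↥({i} : Finset (Fin n))) => X j ω) = Q i := by
      funext ω
      simp only [Function.comp_apply, hψdef, hQdef]
    rw [heq1, heq2] at hIF2
    have hprod : ∀ ω, (C i).indicator (Q i) ω = (if ω ∈ C i then (1:ℝ) else 0) * Q i ω := by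
      intro ω; by_cases h : ω ∈ C i <;> simp [Set.indicator_apply, h]
    have hindm : Measurable (fun ω => if ω ∈ C i then (1:ℝ) else 0) :=
      Measurable.ite (hCm i) measurable_const measurable_const
    have hindint : ∫ ω, (if ω ∈ C i then (1:ℝ) else 0) ∂P = (P (C i)).toReal := by
      have : (fun ω => if ω ∈ C i then (1:ℝ) else 0)
          = (C i).indicator (fun _ => (1:ℝ)) := by
        funext ω; by_cases h : ω ∈ C i <;> simp [Set.indicator_apply, h]
      rw [this, integral_indicator_const (1:ℝ) (hCm i), smul_eq_mul, mul_one]; rfl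
    calc ∫ ω, (C i).indicator (Q i) ω ∂P
        = ∫ ω, (if ω ∈ C i then (1:ℝ) else 0) * Q i ω ∂P :=
          integral_congr_ae (Filter.Eventually.of_forall hprod)
      _ = (∫ ω, (if ω ∈ C i then (1:ℝ) else 0) ∂P) * ∫ ω, Q i ω ∂P :=
          hIF2.integral_fun_mul_eq_mul_integral hindm.aestronglyMeasurable (hQm i).aestronglyMeasurable
      _ = (P (C i)).toReal * π i := by rw [hindint, hQdef, hτ i]
      _ = ∫ ω, (C i).indicator (fun _ => π i) ω ∂P := by
          rw [integral_indicator_const (π i) (hCm i)]; simp [mul_comm, measureReal_def]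
  -- assembly
  have hIπ : ∀ i, Integrable ((C i).indicator (fun _ => π i)) P :=
    fun i => (integrable_const _).indicator (hCm i)
  have hIQ : ∀ i, Integrable ((C i).indicator (Q i)) P :=
    fun i => (hQint i).indicator (hCm i)
  have hLrw : ∀ ω, ((Probed ω).fold max 0 (fun i => X i ω) - ∑ i ∈ Probed ω, π i)
      = G ω - ∑ i, (C i).indicator (fun _ => π i) ω := by
    intro ω
    rw [hGfold ω, hProbedEq ω, Finset.sum_filter]
    congr 1
  calc ∫ ω, ((Probed ω).fold max 0 (fun i => X i ω) - ∑ i ∈ Probed ω, π i) ∂P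
      = ∫ ω, (G ω - ∑ i, (C i).indicator (fun _ => π i) ω) ∂P :=
        integral_congr_ae (Filter.Eventually.of_forall hLrw)
    _ = ∫ ω, G ω ∂P - ∫ ω, ∑ i, (C i).indicator (fun _ => π i) ω ∂P :=
        integral_sub hGint (integrable_finset_sum _ fun i _ => hIπ i)
    _ = ∫ ω, G ω ∂P - ∫ ω, ∑ i, (C i).indicator (Q i) ω ∂P := by
        rw [integral_finset_sum _ (fun i _ => hIπ i), integral_finset_sum _ (fun i _ => hIQ i)]
        congr 1
        exact Finset.sum_congr rfl (fun i _ => (hkey i).symm)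
    _ = ∫ ω, (G ω - ∑ i, (C i).indicator (Q i) ω) ∂P :=
        (integral_sub hGint (integrable_finset_sum _ fun i _ => hIQ i)).symm
    _ = ∫ ω, Finset.univ.fold max 0 (fun i => min (X i ω) (τ i)) ∂P := by
        refine integral_congr_ae ?_
        filter_upwards [MeasureTheory.ae_all_iff.mpr hX0] with ω hω
        have hkey2 := pointwise_key n (fun i => X i ω) τ hω hτ0 hsorted
        have hG' : G ω = (Finset.univ.filter (fun i => ω ∈ C i)).fold max 0 (fun i => X i ω) := by
          rw [← hGfold ω, hProbedEq ω]
        have hfilter : (Finset.univ.filter (fun i => ω ∈ C i))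
            = Finset.univ.filter (fun i : Fin n =>
                (Finset.univ.filter (fun j => j < i)).fold max 0 (fun j => X j ω) < τ i) := by
          refine Finset.filter_congr (fun i _ => ?_)
          exact hCmem ω i
        have hSsum : ∑ i, (C i).indicator (Q i) ω
            = ∑ i ∈ Finset.univ.filter (fun i : Fin n =>
                (Finset.univ.filter (fun j => j < i)).fold max 0 (fun j => X j ω) < τ i),
                max (X i ω - τ i) 0 := by
          rw [Finset.sum_filter]
          refine Finset.sum_congr rfl (fun i _ => ?_)
          by_cases h : ω ∈ C i
          · rw [Set.indicator_of_mem h, if_pos ((hCmem ω i).mp h), hQdef]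
          · rw [Set.indicator_of_notMem h,
              if_neg (fun hh => h ((hCmem ω i).mpr hh))]
        rw [hG', hfilter, hSsum]
        simpa using hkey2
end

section
/- Let n be a natural number and let X_0, …, X_{n−1} be mutually independent integrable real random variables on a probability space (Ω, P), each nonnegative almost surely; for each i let π_i > 0 with π_i ≤ E[X_i], and let τ_i ∈ ℝ satisfy E[(X_i − τ_i)⁺] = π_i. Call a pair of measurable maps Probed, I : Ω → Finset {0,…,n−1} admissible if almost surely I(ω) ⊆ Probed(ω) and |I(ω)| ≤ 1, and for every i the indicator ω ↦ 1[i ∈ Probed(ω)] is independent of X_i. Then the real number E[ max(0, max_{0 ≤ i < n} min(X_i(ω), τ_i)) ] is the greatest element of the set of expected utilities { E[ Σ_{i ∈ I(ω)} X_i(ω) − Σ_{i ∈ Probed(ω)} π_i ] : (Probed, I) admissible }; in particular the supremum is attained. -/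
open MeasureTheory ProbabilityTheory

set_option linter.unusedSectionVars false
set_option linter.unnecessarySimpa false

open MeasureTheory ProbabilityTheory

section Helpers

variable {Ω : Type*} [MeasurableSpace Ω] {ι : Type*} [Fintype ι] [DecidableEq ι]

lemma pandora_mem_meas (F : Ω → Finset ι)
    (h : ∀ S : Finset ι, MeasurableSet {ω | F ω = S}) (i : ι) :
    MeasurableSet {ω | i ∈ F ω} := by
  have he : {ω | i ∈ F ω} = ⋃ S ∈ {S : Finset ι | i ∈ S}, {ω | F ω = S} := by
    ext ω
    simp only [Set.mem_setOf_eq, Set.mem_iUnion, exists_prop]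
    exact ⟨fun hm => ⟨F ω, hm, rfl⟩, fun ⟨S, hS, hFS⟩ => hFS ▸ hS⟩
  rw [he]
  exact MeasurableSet.biUnion (Set.to_countable _) fun S _ => h S

lemma pandora_finsetval_meas (F : Ω → Finset ι)
    (h : ∀ i : ι, MeasurableSet {ω | i ∈ F ω}) (S : Finset ι) :
    MeasurableSet {ω | F ω = S} := by
  have he : {ω | F ω = S} = ⋂ i : ι, {ω | i ∈ F ω ↔ i ∈ S} := by
    ext ω; simp [Finset.ext_iff]
  rw [he]
  refine MeasurableSet.iInter fun i => ?_
  by_cases hi : i ∈ S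
  · simpa [hi] using h i
  · have : {ω | i ∈ F ω ↔ i ∈ S} = {ω | i ∈ F ω}ᶜ := by ext ω; simp [hi]
    rw [this]; exact (h i).compl

lemma pandora_fold_meas {f : ι → Ω → ℝ} (hf : ∀ i, Measurable (f i)) (s : Finset ι) :
    Measurable fun ω => s.fold max 0 (fun i => f i ω) := by
  classical
  induction s using Finset.induction_on with
  | empty => simpa using measurable_const
  | insert _ _ h ih => simp only [Finset.fold_insert h]; exact (hf _).max ih

lemma pandora_ite_indicator {c : Ω → Prop} [DecidablePred c] (f : Ω → ℝ) :
    (fun ω => if c ω then f ω else 0) = Set.indicator {ω | c ω} f :=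
  funext fun ω => by by_cases h : c ω <;> simp [Set.indicator_apply, h]

end Helpers

lemma pandora_core
    {Ω : Type*} [MeasurableSpace Ω] (P : Measure Ω) [IsProbabilityMeasure P]
    (n : ℕ) (X : Fin n → Ω → ℝ)
    (hXm : ∀ i, Measurable (X i)) (hX : ∀ i, Integrable (X i) P)
    (π τ : Fin n → ℝ)
    (hτ : ∀ i, ∫ ω, max (X i ω - τ i) 0 ∂P = π i)
    (Probed I : Ω → Finset (Fin n))
    (hPm : ∀ i, MeasurableSet {ω | i ∈ Probed ω})
    (hIm : ∀ i, MeasurableSet {ω | i ∈ I ω})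
    (hind : ∀ i, IndepFun (fun ω => if i ∈ Probed ω then (1 : ℝ) else 0) (X i) P) :
    ∫ ω, ((∑ i ∈ I ω, X i ω) - ∑ i ∈ Probed ω, π i) ∂P
      = (∑ i : Fin n, ∫ ω, (if i ∈ I ω then min (X i ω) (τ i) else 0) ∂P)
        - ∑ i : Fin n, (∫ ω, (if i ∈ Probed ω then max (X i ω - τ i) 0 else 0) ∂P
            - ∫ ω, (if i ∈ I ω then max (X i ω - τ i) 0 else 0) ∂P) := by
  classical
  set g : Fin n → Ω → ℝ := fun i ω => max (X i ω - τ i) 0 with hg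
  have hgm : ∀ i, Measurable (g i) := fun i => ((hXm i).sub measurable_const).max measurable_const
  have hgint : ∀ i, Integrable (g i) P :=
    fun i => ((hX i).sub (integrable_const (τ i))).sup (integrable_const 0)
  have hmin_int : ∀ i, Integrable (fun ω => min (X i ω) (τ i)) P :=
    fun i => (hX i).inf (integrable_const (τ i))
  have hmin_meas : ∀ i, Measurable (fun ω => min (X i ω) (τ i)) :=
    fun i => (hXm i).min measurable_const
  -- integrability of indicator pieces
  have hIX : ∀ i, Integrable (fun ω => if i ∈ I ω then X i ω else 0) P := by
    intro i; rw [pandora_ite_indicator]; exact (hX i).indicator (hIm i)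
  have hImin : ∀ i, Integrable (fun ω => if i ∈ I ω then min (X i ω) (τ i) else 0) P := by
    intro i; rw [pandora_ite_indicator]; exact (hmin_int i).indicator (hIm i)
  have hIg : ∀ i, Integrable (fun ω => if i ∈ I ω then g i ω else 0) P := by
    intro i; rw [pandora_ite_indicator]; exact (hgint i).indicator (hIm i)
  have hPg : ∀ i, Integrable (fun ω => if i ∈ Probed ω then g i ω else 0) P := by
    intro i; rw [pandora_ite_indicator]; exact (hgint i).indicator (hPm i)
  have hPπ : ∀ i, Integrable (fun ω => if i ∈ Probed ω then π i else 0) P := by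
    intro i; rw [pandora_ite_indicator]; exact (integrable_const (π i)).indicator (hPm i)
  -- rewrite the integrand as a sum over univ
  have hrw : ∀ ω, ((∑ i ∈ I ω, X i ω) - ∑ i ∈ Probed ω, π i)
      = (∑ i : Fin n, (if i ∈ I ω then X i ω else 0))
        - ∑ i : Fin n, (if i ∈ Probed ω then π i else 0) := by
    intro ω
    rw [Finset.sum_ite_mem, Finset.sum_ite_mem, Finset.univ_inter, Finset.univ_inter]
  have h1 : ∫ ω, ((∑ i ∈ I ω, X i ω) - ∑ i ∈ Probed ω, π i) ∂P
      = (∑ i : Fin n, ∫ ω, (if i ∈ I ω then X i ω else 0) ∂P)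
        - ∑ i : Fin n, ∫ ω, (if i ∈ Probed ω then π i else 0) ∂P := by
    simp only [hrw]
    rw [integral_sub (integrable_finset_sum _ fun i _ => hIX i)
        (integrable_finset_sum _ fun i _ => hPπ i),
      integral_finset_sum _ fun i _ => hIX i, integral_finset_sum _ fun i _ => hPπ i]
  -- independence: ∫ ifP π = ∫ ifP g
  have h2 : ∀ i, ∫ ω, (if i ∈ Probed ω then π i else 0) ∂P
      = ∫ ω, (if i ∈ Probed ω then g i ω else 0) ∂P := by
    intro i
    have hindm : Measurable (fun ω => if i ∈ Probed ω then (1 : ℝ) else 0) := by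
      rw [pandora_ite_indicator]; exact measurable_const.indicator (hPm i)
    have hig : IndepFun (fun ω => if i ∈ Probed ω then (1 : ℝ) else 0) (g i) P := by
      exact (hind i).comp (measurable_id)
        (show Measurable (fun x : ℝ => max (x - τ i) 0) from
          ((measurable_id.sub_const (τ i))).max measurable_const)
    have e1 : (fun ω => if i ∈ Probed ω then π i else 0)
        = fun ω => (if i ∈ Probed ω then (1 : ℝ) else 0) * π i := by
      funext ω; by_cases h : i ∈ Probed ω <;> simp [h]
    have e2 : (fun ω => if i ∈ Probed ω then g i ω else 0)
        = fun ω => (if i ∈ Probed ω then (1 : ℝ) else 0) * g i ω := by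
      funext ω; by_cases h : i ∈ Probed ω <;> simp [h]
    rw [e1, e2, integral_mul_const,
      hig.integral_fun_mul_eq_mul_integral hindm.aestronglyMeasurable (hgm i).aestronglyMeasurable, hτ i]
  -- splitting : ifI X = ifI min + ifI g
  have h3 : ∀ i, ∫ ω, (if i ∈ I ω then X i ω else 0) ∂P
      = (∫ ω, (if i ∈ I ω then min (X i ω) (τ i) else 0) ∂P)
        + ∫ ω, (if i ∈ I ω then g i ω else 0) ∂P := by
    intro i
    rw [← integral_add (hImin i) (hIg i)]
    congr 1; funext ω
    by_cases h : i ∈ I ω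
    · simp only [h, if_true, hg]
      rcases le_total (X i ω) (τ i) with hle | hle
      · rw [min_eq_left hle, max_eq_right (by linarith)]; ring
      · rw [min_eq_right hle, max_eq_left (by linarith)]; ring
    · simp [h]
  simp only [h1, h2, h3]
  rw [Finset.sum_add_distrib, Finset.sum_sub_distrib]
  ring

lemma pandora_upper
    {Ω : Type*} [MeasurableSpace Ω] (P : Measure Ω) [IsProbabilityMeasure P]
    (n : ℕ) (X : Fin n → Ω → ℝ)
    (hXm : ∀ i, Measurable (X i)) (hX : ∀ i, Integrable (X i) P)
    (π τ : Fin n → ℝ)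
    (hτ : ∀ i, ∫ ω, max (X i ω - τ i) 0 ∂P = π i)
    (Probed I : Ω → Finset (Fin n))
    (hPm : ∀ i, MeasurableSet {ω | i ∈ Probed ω})
    (hIm : ∀ i, MeasurableSet {ω | i ∈ I ω})
    (hae : ∀ᵐ ω ∂P, I ω ⊆ Probed ω ∧ (I ω).card ≤ 1)
    (hind : ∀ i, IndepFun (fun ω => if i ∈ Probed ω then (1 : ℝ) else 0) (X i) P) :
    ∫ ω, ((∑ i ∈ I ω, X i ω) - ∑ i ∈ Probed ω, π i) ∂P
      ≤ ∫ ω, Finset.univ.fold max 0 (fun i => min (X i ω) (τ i)) ∂P := by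
  classical
  set M : Ω → ℝ := fun ω => Finset.univ.fold max 0 (fun i => min (X i ω) (τ i)) with hM
  have hmin_int : ∀ i, Integrable (fun ω => min (X i ω) (τ i)) P :=
    fun i => (hX i).inf (integrable_const (τ i))
  have hmin_meas : ∀ i, Measurable (fun ω => min (X i ω) (τ i)) :=
    fun i => (hXm i).min measurable_const
  have hgint : ∀ i, Integrable (fun ω => max (X i ω - τ i) 0) P :=
    fun i => ((hX i).sub (integrable_const (τ i))).sup (integrable_const 0)
  have hImin : ∀ i, Integrable (fun ω => if i ∈ I ω then min (X i ω) (τ i) else 0) P := by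
    intro i; rw [pandora_ite_indicator]; exact (hmin_int i).indicator (hIm i)
  have hIg : ∀ i, Integrable (fun ω => if i ∈ I ω then max (X i ω - τ i) 0 else 0) P := by
    intro i; rw [pandora_ite_indicator]; exact (hgint i).indicator (hIm i)
  have hPg : ∀ i, Integrable (fun ω => if i ∈ Probed ω then max (X i ω - τ i) 0 else 0) P := by
    intro i; rw [pandora_ite_indicator]; exact (hgint i).indicator (hPm i)
  have hM0 : ∀ ω, 0 ≤ M ω := fun ω => (Finset.le_fold_max _).mpr (Or.inl le_rfl)
  have hMub : ∀ ω i, min (X i ω) (τ i) ≤ M ω :=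
    fun ω i => (Finset.le_fold_max _).mpr (Or.inr ⟨i, Finset.mem_univ i, le_rfl⟩)
  have hMmeas : Measurable M := pandora_fold_meas hmin_meas _
  have hMint : Integrable M P := by
    refine Integrable.mono (integrable_finset_sum Finset.univ
      fun i _ => (hmin_int i).abs) hMmeas.aestronglyMeasurable (Filter.Eventually.of_forall ?_)
    intro ω
    have h1 : M ω ≤ ∑ i : Fin n, |min (X i ω) (τ i)| := by
      refine (Finset.fold_max_le _).mpr ⟨Finset.sum_nonneg fun i _ => abs_nonneg _, fun i _ => ?_⟩
      exact le_trans (le_abs_self _) (Finset.single_le_sum (f := fun j => |min (X j ω) (τ j)|) (fun j _ => abs_nonneg _)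
        (Finset.mem_univ i))
    have h2 : 0 ≤ ∑ i : Fin n, |min (X i ω) (τ i)| := Finset.sum_nonneg fun i _ => abs_nonneg _
    simp only [Real.norm_eq_abs]
    rw [abs_of_nonneg (hM0 ω), abs_of_nonneg h2]
    exact h1
  rw [pandora_core P n X hXm hX π τ hτ Probed I hPm hIm hind]
  have hT2 : 0 ≤ ∑ i : Fin n,
      (∫ ω, (if i ∈ Probed ω then max (X i ω - τ i) 0 else 0) ∂P
        - ∫ ω, (if i ∈ I ω then max (X i ω - τ i) 0 else 0) ∂P) := by
    refine Finset.sum_nonneg fun i _ => sub_nonneg.mpr ?_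
    refine integral_mono_ae (hIg i) (hPg i) ?_
    filter_upwards [hae] with ω hω
    by_cases hI : i ∈ I ω
    · have hP : i ∈ Probed ω := hω.1 hI
      simp [hI, hP]
    · by_cases hP : i ∈ Probed ω <;> simp [hI, hP, le_max_right]
  have hT1 : (∑ i : Fin n, ∫ ω, (if i ∈ I ω then min (X i ω) (τ i) else 0) ∂P)
      ≤ ∫ ω, M ω ∂P := by
    rw [← integral_finset_sum _ fun i _ => hImin i]
    refine integral_mono_ae (integrable_finset_sum _ fun i _ => hImin i) hMint ?_
    filter_upwards [hae] with ω hω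
    have hsum : (∑ i : Fin n, if i ∈ I ω then min (X i ω) (τ i) else 0)
        = ∑ i ∈ I ω, min (X i ω) (τ i) := by
      rw [Finset.sum_ite_mem, Finset.univ_inter]
    rw [hsum]
    rcases Finset.eq_empty_or_nonempty (I ω) with he | hne
    · simp [he, hM0 ω]
    · have hcard : (I ω).card = 1 := le_antisymm hω.2 (Finset.card_pos.mpr hne)
      obtain ⟨j, hj⟩ := Finset.card_eq_one.mp hcard
      rw [hj, Finset.sum_singleton]
      exact hMub ω j
  linarith

lemma pandora_attained
    {Ω : Type*} [MeasurableSpace Ω] (P : Measure Ω) [IsProbabilityMeasure P]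
    (n : ℕ) (X : Fin n → Ω → ℝ)
    (hXm : ∀ i, Measurable (X i)) (hX : ∀ i, Integrable (X i) P)
    (hindep : iIndepFun X P)
    (π τ : Fin n → ℝ)
    (hτ : ∀ i, ∫ ω, max (X i ω - τ i) 0 ∂P = π i) :
    ∃ Probed I : Ω → Finset (Fin n),
        (∀ S : Finset (Fin n), MeasurableSet {ω | Probed ω = S}) ∧
        (∀ S : Finset (Fin n), MeasurableSet {ω | I ω = S}) ∧
        (∀ᵐ ω ∂P, I ω ⊆ Probed ω ∧ (I ω).card ≤ 1) ∧
        (∀ i, IndepFun (fun ω => if i ∈ Probed ω then (1 : ℝ) else 0) (X i) P) ∧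
        (∫ ω, Finset.univ.fold max 0 (fun i => min (X i ω) (τ i)) ∂P)
          = ∫ ω, ((∑ i ∈ I ω, X i ω) - ∑ i ∈ Probed ω, π i) ∂P := by
  classical
  set σ : Equiv.Perm (Fin n) := Tuple.sort (fun i => -τ i) with hσ
  have htanti : ∀ k l : Fin n, k ≤ l → τ (σ l) ≤ τ (σ k) := by
    intro k l hkl
    have := Tuple.monotone_sort (fun i => -τ i) hkl
    simpa using this
  set M : Ω → ℝ := fun ω => Finset.univ.fold max 0 (fun i => min (X i ω) (τ i)) with hM
  have hM0 : ∀ ω, 0 ≤ M ω := fun ω => (Finset.le_fold_max _).mpr (Or.inl le_rfl)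
  have hMub : ∀ ω i, min (X i ω) (τ i) ≤ M ω :=
    fun ω i => (Finset.le_fold_max _).mpr (Or.inr ⟨i, Finset.mem_univ i, le_rfl⟩)
  have hMmeas : Measurable M :=
    pandora_fold_meas (fun i => (hXm i).min measurable_const) _
  set PP : Ω → Finset (Fin n) := fun ω => Finset.univ.filter
      (fun k => 0 < τ (σ k) ∧ ∀ l, l < k → X (σ l) ω < τ (σ k)) with hPP
  set A : Ω → Finset (Fin n) := fun ω => Finset.univ.filter
      (fun k => 0 < M ω ∧ min (X (σ k) ω) (τ (σ k)) = M ω) with hA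
  set IP : Ω → Finset (Fin n) := fun ω => Finset.univ.filter
      (fun k => k ∈ A ω ∧ ∀ l, l < k → l ∉ A ω) with hIP
  have hPPmem : ∀ ω k, k ∈ PP ω ↔ (0 < τ (σ k) ∧ ∀ l, l < k → X (σ l) ω < τ (σ k)) := by
    intro ω k; simp [hPP]
  have hAmem : ∀ ω k, k ∈ A ω ↔ (0 < M ω ∧ min (X (σ k) ω) (τ (σ k)) = M ω) := by
    intro ω k; simp [hA]
  have hIPmem : ∀ ω k, k ∈ IP ω ↔ (k ∈ A ω ∧ ∀ l, l < k → l ∉ A ω) := by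
    intro ω k; simp [hIP]
  have himg : ∀ (F : Ω → Finset (Fin n)) (ω : Ω) (i : Fin n),
      i ∈ (F ω).image σ ↔ σ.symm i ∈ F ω := by
    intro F ω i
    simp only [Finset.mem_image]
    constructor
    · rintro ⟨k, hk, rfl⟩; simpa using hk
    · intro h; exact ⟨σ.symm i, h, by simp⟩
  -- A nonempty when M positive
  have hAne : ∀ ω, 0 < M ω → (A ω).Nonempty := by
    intro ω hpos
    rcases (Finset.le_fold_max (M ω)).mp le_rfl with h | ⟨i, _, hi⟩
    · exact absurd (lt_of_lt_of_le hpos h) (lt_irrefl _)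
    · refine ⟨σ.symm i, (hAmem ω _).mpr ⟨hpos, ?_⟩⟩
      have hσi : σ (σ.symm i) = i := Equiv.apply_symm_apply σ i
      rw [hσi]
      exact le_antisymm (hMub ω i) hi
  -- IP characterization
  have hIPempty : ∀ ω, A ω = ∅ → IP ω = ∅ := by
    intro ω h
    rw [Finset.eq_empty_iff_forall_notMem]
    intro k hk
    exact absurd (((hIPmem ω k).mp hk).1) (by simp [h])
  have hIPsingle : ∀ ω (h : (A ω).Nonempty), IP ω = {(A ω).min' h} := by
    intro ω h
    ext k
    rw [hIPmem, Finset.mem_singleton]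
    constructor
    · rintro ⟨hkA, hkmin⟩
      rcases eq_or_lt_of_le (Finset.min'_le _ k hkA) with he | hlt
      · exact he.symm
      · exact absurd (Finset.min'_mem _ h) (hkmin _ hlt)
    · rintro rfl
      exact ⟨Finset.min'_mem _ h, fun l hl hlA =>
        absurd (Finset.min'_le _ l hlA) (not_le.mpr hl)⟩
  -- Claim 1 : IP ⊆ PP
  have hIPsubPP : ∀ ω, IP ω ⊆ PP ω := by
    intro ω k hk
    rw [hIPmem] at hk
    obtain ⟨hkA, hkmin⟩ := hk
    rw [hAmem] at hkA
    obtain ⟨hMpos, hminEq⟩ := hkA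
    have htk : M ω ≤ τ (σ k) := hminEq ▸ min_le_right _ _
    refine (hPPmem ω k).mpr ⟨lt_of_lt_of_le hMpos htk, fun l hl => ?_⟩
    by_contra hc
    push_neg at hc
    have h1 : τ (σ k) ≤ min (X (σ l) ω) (τ (σ l)) :=
      le_min hc (htanti l k (le_of_lt hl))
    have h2 : min (X (σ l) ω) (τ (σ l)) = M ω :=
      le_antisymm (hMub ω (σ l)) (le_trans htk h1)
    exact (hkmin l hl) ((hAmem ω l).mpr ⟨hMpos, h2⟩)
  -- Claim 2 : probed but not taken implies no overshoot
  have hClaim2 : ∀ ω k, k ∈ PP ω → k ∉ IP ω → X (σ k) ω ≤ τ (σ k) := by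
    intro ω k hkPP hkIP
    by_contra hc
    push_neg at hc
    obtain ⟨h0tk, hbefore⟩ := (hPPmem ω k).mp hkPP
    have hmink : min (X (σ k) ω) (τ (σ k)) = τ (σ k) := min_eq_right (le_of_lt hc)
    have hMge : τ (σ k) ≤ M ω := hmink ▸ hMub ω (σ k)
    have hMpos : 0 < M ω := lt_of_lt_of_le h0tk hMge
    have hne := hAne ω hMpos
    set k₀ := (A ω).min' hne with hk₀
    have hk₀A := Finset.min'_mem (A ω) hne
    obtain ⟨_, hk₀min⟩ := (hAmem ω k₀).mp hk₀A
    rcases lt_trichotomy k₀ k with hlt | heq | hgt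
    · have h1 : X (σ k₀) ω < τ (σ k) := hbefore k₀ hlt
      have h2 : M ω ≤ X (σ k₀) ω := hk₀min ▸ min_le_left _ _
      linarith
    · exact hkIP (by rw [hIPsingle ω hne, Finset.mem_singleton, ← heq, hk₀])
    · have h1 : M ω ≤ τ (σ k₀) := hk₀min ▸ min_le_right _ _
      have h2 : τ (σ k₀) ≤ τ (σ k) := htanti k k₀ (le_of_lt hgt)
      have h3 : τ (σ k) = M ω := le_antisymm hMge (le_trans h1 h2)
      have h4 : k ∈ A ω := (hAmem ω k).mpr ⟨hMpos, by rw [hmink, h3]⟩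
      exact absurd (Finset.min'_le _ k h4) (not_le.mpr hgt)
  -- P6 : the selected sum equals M
  have hP6 : ∀ ω, (∑ i ∈ (IP ω).image σ, min (X i ω) (τ i)) = M ω := by
    intro ω
    rw [Finset.sum_image (fun x _ y _ h => σ.injective h)]
    by_cases hpos : 0 < M ω
    · have hne := hAne ω hpos
      rw [hIPsingle ω hne, Finset.sum_singleton]
      exact ((hAmem ω _).mp (Finset.min'_mem (A ω) hne)).2
    · have hMz : M ω = 0 := le_antisymm (not_lt.mp hpos) (hM0 ω)
      have hAe : A ω = ∅ := by
        rw [Finset.eq_empty_iff_forall_notMem]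
        intro k hk
        exact hpos ((hAmem ω k).mp hk).1
      rw [hIPempty ω hAe, Finset.sum_empty, hMz]
  -- measurability of membership sets
  have hPPm : ∀ k, MeasurableSet {ω | k ∈ PP ω} := by
    intro k
    have he : {ω | k ∈ PP ω}
        = {ω | 0 < τ (σ k)} ∩ ⋂ (l : Fin n) (_ : l < k), {ω | X (σ l) ω < τ (σ k)} := by
      ext ω; simp [hPPmem]
    rw [he]
    refine MeasurableSet.inter ?_ (MeasurableSet.iInter fun l => MeasurableSet.iInter fun _ =>
      measurableSet_lt (hXm _) measurable_const)
    by_cases h : 0 < τ (σ k)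
    · simp only [h]; simpa using MeasurableSet.univ
    · simp only [h]; simpa using MeasurableSet.empty
  have hAm : ∀ k, MeasurableSet {ω | k ∈ A ω} := by
    intro k
    have he : {ω | k ∈ A ω}
        = {ω | 0 < M ω} ∩ {ω | min (X (σ k) ω) (τ (σ k)) = M ω} := by
      ext ω; simp [hAmem]
    rw [he]
    exact (measurableSet_lt measurable_const hMmeas).inter
      (measurableSet_eq_fun ((hXm _).min measurable_const) hMmeas)
  have hIPm : ∀ k, MeasurableSet {ω | k ∈ IP ω} := by
    intro k
    have he : {ω | k ∈ IP ω}
        = {ω | k ∈ A ω} ∩ ⋂ (l : Fin n) (_ : l < k), {ω | l ∈ A ω}ᶜ := by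
      ext ω; simp [hIPmem]
    rw [he]
    exact (hAm k).inter (MeasurableSet.iInter fun l => MeasurableSet.iInter fun _ =>
      (hAm l).compl)
  have hPm : ∀ i, MeasurableSet {ω | i ∈ (PP ω).image σ} := by
    intro i
    have he : {ω | i ∈ (PP ω).image σ} = {ω | σ.symm i ∈ PP ω} := by
      ext ω; exact himg PP ω i
    rw [he]; exact hPPm _
  have hIm : ∀ i, MeasurableSet {ω | i ∈ (IP ω).image σ} := by
    intro i
    have he : {ω | i ∈ (IP ω).image σ} = {ω | σ.symm i ∈ IP ω} := by
      ext ω; exact himg IP ω i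
    rw [he]; exact hIPm _
  -- independence
  have hind : ∀ i, IndepFun (fun ω => if i ∈ (PP ω).image σ then (1 : ℝ) else 0) (X i) P := by
    intro i
    set k : Fin n := σ.symm i with hk
    have hσk : σ k = i := Equiv.apply_symm_apply σ i
    set T : Finset (Fin n) := (Finset.univ.filter (· < k)).image σ with hT
    have memT : ∀ l, l < k → σ l ∈ T := fun l hl =>
      Finset.mem_image_of_mem σ (by simp [hl])
    have hiT : i ∉ T := by
      rw [hT]
      simp only [Finset.mem_image, Finset.mem_filter, Finset.mem_univ, true_and]
      rintro ⟨l, hl, hli⟩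
      have : l = k := σ.injective (by rw [hli, hσk])
      exact absurd hl (by rw [this]; exact lt_irrefl k)
    have hdisj : Disjoint T {i} := Finset.disjoint_singleton_right.mpr hiT
    have base := hindep.indepFun_finset T {i} hdisj hXm
    set φ : ((j : T) → ℝ) → ℝ := fun v =>
      if (0 < τ (σ k) ∧ ∀ l (hl : l < k), v ⟨σ l, memT l hl⟩ < τ (σ k)) then (1 : ℝ) else 0
      with hφdef
    set ψ : ((j : ({i} : Finset (Fin n))) → ℝ) → ℝ := fun v =>
      v ⟨i, Finset.mem_singleton_self i⟩ with hψdef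
    have hφ : Measurable φ := by
      rw [hφdef, pandora_ite_indicator]
      refine measurable_const.indicator ?_
      have he : {v : (j : T) → ℝ |
          0 < τ (σ k) ∧ ∀ l (hl : l < k), v ⟨σ l, memT l hl⟩ < τ (σ k)}
          = {v | 0 < τ (σ k)} ∩
            ⋂ (l : Fin n) (hl : l < k), {v | v ⟨σ l, memT l hl⟩ < τ (σ k)} := by
        ext v; simp
      rw [he]
      refine MeasurableSet.inter ?_ (MeasurableSet.iInter fun l => MeasurableSet.iInter fun hl =>
        measurableSet_lt (measurable_pi_apply _) measurable_const)
      by_cases h : 0 < τ (σ k)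
      · simp only [h]; simpa using MeasurableSet.univ
      · simp only [h]; simpa using MeasurableSet.empty
    have hψ : Measurable ψ := measurable_pi_apply _
    have hφeq : (fun ω => if i ∈ (PP ω).image σ then (1 : ℝ) else 0)
        = φ ∘ (fun ω (j : T) => X j ω) := by
      funext ω
      simp only [Function.comp, hφdef]
      have hmem : (i ∈ (PP ω).image σ) ↔
          (0 < τ (σ k) ∧ ∀ l, l < k → X (σ l) ω < τ (σ k)) := by
        rw [himg PP ω i, hPPmem]
      by_cases h : (0 < τ (σ k) ∧ ∀ l, l < k → X (σ l) ω < τ (σ k))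
      · rw [if_pos (hmem.mpr h), if_pos h]
      · rw [if_neg (fun hc => h (hmem.mp hc)), if_neg h]
    have hres := base.comp hφ hψ
    rw [hφeq]
    exact hres
  -- assemble
  have hImin : ∀ i, Integrable (fun ω => if i ∈ (IP ω).image σ then min (X i ω) (τ i) else 0) P := by
    intro i; rw [pandora_ite_indicator]
    exact ((hX i).inf (integrable_const (τ i))).indicator (hIm i)
  refine ⟨fun ω => (PP ω).image σ, fun ω => (IP ω).image σ,
    fun S => pandora_finsetval_meas _ hPm S,
    fun S => pandora_finsetval_meas _ hIm S,
    Filter.Eventually.of_forall (fun ω => ⟨Finset.image_subset_image (hIPsubPP ω), ?_⟩),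
    hind, ?_⟩
  · refine le_trans Finset.card_image_le (Finset.card_le_one.mpr ?_)
    intro a ha b hb
    obtain ⟨haA, hamin⟩ := (hIPmem ω a).mp ha
    obtain ⟨hbA, hbmin⟩ := (hIPmem ω b).mp hb
    rcases lt_trichotomy a b with h | h | h
    · exact absurd haA (hbmin a h)
    · exact h
    · exact absurd hbA (hamin b h)
  · rw [pandora_core P n X hXm hX π τ hτ (fun ω => (PP ω).image σ)
      (fun ω => (IP ω).image σ) hPm hIm hind]
    have hgz : ∀ (i : Fin n) (ω : Ω),
        (if i ∈ (PP ω).image σ then max (X i ω - τ i) 0 else 0)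
          = (if i ∈ (IP ω).image σ then max (X i ω - τ i) 0 else 0) := by
      intro i ω
      by_cases hI : i ∈ (IP ω).image σ
      · rw [if_pos hI, if_pos (Finset.image_subset_image (hIPsubPP ω) hI)]
      · by_cases hP : i ∈ (PP ω).image σ
        · rw [if_pos hP, if_neg hI]
          have h1 : σ.symm i ∈ PP ω := (himg PP ω i).mp hP
          have h2 : σ.symm i ∉ IP ω := fun hc => hI ((himg IP ω i).mpr hc)
          have h3 := hClaim2 ω (σ.symm i) h1 h2
          rw [Equiv.apply_symm_apply] at h3
          exact max_eq_right (by linarith)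
        · rw [if_neg hP, if_neg hI]
    simp only [hgz, sub_self, Finset.sum_const_zero, sub_zero]
    rw [← integral_finset_sum _ (fun i _ => hImin i)]
    refine integral_congr_ae (Filter.Eventually.of_forall fun ω => ?_)
    show M ω = ∑ i : Fin n, if i ∈ (IP ω).image σ then min (X i ω) (τ i) else 0
    rw [Finset.sum_ite_mem, Finset.univ_inter]
    exact (hP6 ω).symm

theorem pandora_box_optimal_utility
    {Ω : Type*} [MeasurableSpace Ω] (P : Measure Ω) [IsProbabilityMeasure P]
    (n : ℕ) (X : Fin n → Ω → ℝ)
    (hXm : ∀ i, Measurable (X i)) (hX : ∀ i, Integrable (X i) P)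
    (hX0 : ∀ i, ∀ᵐ ω ∂P, 0 ≤ X i ω)
    (hindep : iIndepFun X P)
    (π τ : Fin n → ℝ) (hπ : ∀ i, 0 < π i) (hπE : ∀ i, π i ≤ ∫ ω, X i ω ∂P)
    (hτ : ∀ i, ∫ ω, max (X i ω - τ i) 0 ∂P = π i) :
    IsGreatest
      { u : ℝ | ∃ Probed I : Ω → Finset (Fin n),
          (∀ S : Finset (Fin n), MeasurableSet {ω | Probed ω = S}) ∧
          (∀ S : Finset (Fin n), MeasurableSet {ω | I ω = S}) ∧
          (∀ᵐ ω ∂P, I ω ⊆ Probed ω ∧ (I ω).card ≤ 1) ∧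
          (∀ i, IndepFun (fun ω => if i ∈ Probed ω then (1 : ℝ) else 0) (X i) P) ∧
          u = ∫ ω, ((∑ i ∈ I ω, X i ω) - ∑ i ∈ Probed ω, π i) ∂P }
      (∫ ω, Finset.univ.fold max 0 (fun i => min (X i ω) (τ i)) ∂P) := by
  constructor
  · obtain ⟨Probed, I, h1, h2, h3, h4, h5⟩ :=
      pandora_attained P n X hXm hX hindep π τ hτ
    exact ⟨Probed, I, h1, h2, h3, h4, h5⟩
  · rintro u ⟨Probed, I, hPmS, hImS, hae, hind, rfl⟩
    exact pandora_upper P n X hXm hX π τ hτ Probed I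
      (pandora_mem_meas Probed hPmS) (pandora_mem_meas I hImS) hae hind
end

section
/- Let α be a type with decidable equality, m a natural number, and S : Fin m → Finset α a family of finite sets. For I a finset of indices define value(I) = |⋃_{i ∈ I} S_i| − Σ_{i ∈ I} (|S_i| − 1) (as an integer). Then the maximum of value(I) over all finsets I of indices equals the maximum of |I| over all finsets I of indices whose sets are pairwise disjoint (i.e. S_i ∩ S_j = ∅ for all distinct i, j ∈ I). -/
open Finset

private lemma val_eq_card_of_disjoint {α : Type*} [DecidableEq α] {m : ℕ} (S : Fin m → Finset α)
    (I : Finset (Fin m)) (hd : ∀ i ∈ I, ∀ j ∈ I, i ≠ j → S i ∩ S j = ∅) :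
    ((I.biUnion S).card : ℤ) - ∑ i ∈ I, (((S i).card : ℤ) - 1) = (I.card : ℤ) := by
  have hcb : (I.biUnion S).card = ∑ i ∈ I, (S i).card :=
    card_biUnion (fun i hi j hj hij => disjoint_iff_inter_eq_empty.mpr (hd i hi j hj hij))
  have h2 : ∑ i ∈ I, (((S i).card : ℤ) - 1)
      = (∑ i ∈ I, ((S i).card : ℤ)) - (I.card : ℤ) := by
    rw [Finset.sum_sub_distrib]; simp
  rw [hcb, h2]; push_cast; ring

private lemma val_key {α : Type*} [DecidableEq α] {m : ℕ} (S : Fin m → Finset α) :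
    ∀ n (I : Finset (Fin m)), I.card ≤ n → ∃ J : Finset (Fin m),
      (∀ i ∈ J, ∀ j ∈ J, i ≠ j → S i ∩ S j = ∅) ∧
      ((I.biUnion S).card : ℤ) - ∑ i ∈ I, (((S i).card : ℤ) - 1) ≤ (J.card : ℤ) := by
  intro n
  induction n with
  | zero =>
    intro I hI
    have : I = ∅ := card_eq_zero.mp (Nat.le_zero.mp hI)
    subst this
    exact ⟨∅, by simp, by simp⟩
  | succ n ih =>
    intro I hI
    by_cases hd : ∀ i ∈ I, ∀ j ∈ I, i ≠ j → S i ∩ S j = ∅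
    · exact ⟨I, hd, le_of_eq (val_eq_card_of_disjoint S I hd)⟩
    · push_neg at hd
      obtain ⟨i, hi, j, hj, hij, hne⟩ := hd
      have hj' : j ∈ I.erase i := mem_erase.mpr ⟨hij.symm, hj⟩
      obtain ⟨J, hJ, hle⟩ := ih (I.erase i)
        (Nat.le_of_lt_succ (lt_of_lt_of_le (card_erase_lt_of_mem hi) hI))
      refine ⟨J, hJ, le_trans ?_ hle⟩
      -- show val I ≤ val (I.erase i)
      set B := (I.erase i).biUnion S with hB
      have hIins : I = insert i (I.erase i) := (insert_erase hi).symm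
      have hbu : I.biUnion S = S i ∪ B := by
        rw [hIins]; exact biUnion_insert ..
      have hsum : ∑ k ∈ I, (((S k).card : ℤ) - 1)
          = (((S i).card : ℤ) - 1) + ∑ k ∈ I.erase i, (((S k).card : ℤ) - 1) := by
        exact (Finset.add_sum_erase I (fun k => (((S k).card : ℤ) - 1)) hi).symm
      have hsub : S i ∩ S j ⊆ S i ∩ B := by
        exact inter_subset_inter (Finset.Subset.refl _) (subset_biUnion_of_mem S hj')
      have hpos : 1 ≤ (S i ∩ B).card := by
        have : (S i ∩ S j).Nonempty := hne
        exact card_pos.mpr (this.mono hsub)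
      have hcard : (S i ∪ B).card + 1 ≤ (S i).card + B.card := by
        have := card_union_add_card_inter (S i) B
        omega
      rw [hbu, hsum]
      have : ((S i ∪ B).card : ℤ) + 1 ≤ ((S i).card : ℤ) + (B.card : ℤ) := by
        exact_mod_cast hcard
      linarith

theorem coverage_minus_prices_eq_set_packing
    {α : Type*} [DecidableEq α] (m : ℕ) (S : Fin m → Finset α) :
    (Finset.univ : Finset (Finset (Fin m))).sup' Finset.univ_nonempty
        (fun I => ((I.biUnion S).card : ℤ) - ∑ i ∈ I, (((S i).card : ℤ) - 1))
      = ((Finset.univ : Finset (Finset (Fin m))).filter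
            (fun I => ∀ i ∈ I, ∀ j ∈ I, i ≠ j → S i ∩ S j = ∅)).sup'
          ⟨∅, by simp⟩ (fun I => (I.card : ℤ)) := by
  apply le_antisymm
  · apply Finset.sup'_le
    intro I _
    obtain ⟨J, hJ, hle⟩ := val_key S I.card I le_rfl
    exact hle.trans (Finset.le_sup' (fun (I : Finset (Fin m)) => (I.card : ℤ)) (mem_filter.mpr ⟨mem_univ _, hJ⟩))
  · apply Finset.sup'_le
    intro I hI
    rw [mem_filter] at hI
    calc (I.card : ℤ)
        = ((I.biUnion S).card : ℤ) - ∑ i ∈ I, (((S i).card : ℤ) - 1) :=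
          (val_eq_card_of_disjoint S I hI.2).symm
      _ ≤ _ := Finset.le_sup' (fun (I : Finset (Fin m)) => ((I.biUnion S).card : ℤ) - ∑ i ∈ I, (((S i).card : ℤ) - 1)) (mem_univ I)
end

section
/- Let n be a positive natural number, 0 < p ≤ 1, and equip the space of functions ω : Fin n → Bool with the product of n copies of the Bernoulli(p) measure (each coordinate equals true with probability p, independently). Define N(ω) = k + 1 if k is the smallest index with ω_k = true, and N(ω) = n if no coordinate is true; define U(ω) = (1/p²)·1[∃ i, ω_i = true] − N(ω). Then E[U] = (1 − (1−p)^n) · (1/p² − 1/p). -/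
open MeasureTheory

/-- weight of a Bernoulli(p) outcome -/
noncomputable def pandoraWt (p : ℝ) : Bool → ℝ := fun b => if b then p else 1 - p

/-- first success time (capped at n) -/
def pandoraM : (n : ℕ) → (Fin n → Bool) → ℕ
  | 0, _ => 0
  | n + 1, ω => if ω 0 then 1 else pandoraM n (fun j => ω j.succ) + 1

lemma pandoraM_succ (n : ℕ) (ω : Fin (n+1) → Bool) :
    pandoraM (n+1) ω = if ω 0 then 1 else pandoraM n (fun j => ω j.succ) + 1 := rfl

lemma pandoraM_le : ∀ n (ω : Fin n → Bool), pandoraM n ω ≤ n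
  | 0, _ => le_refl 0
  | n + 1, ω => by
    unfold pandoraM
    split
    · omega
    · have := pandoraM_le n (fun j => ω j.succ); omega

lemma pandoraM_pos : ∀ n (ω : Fin (n+1) → Bool), 1 ≤ pandoraM (n+1) ω := by
  intro n ω
  unfold pandoraM
  split <;> omega

lemma inf'_add_one {ι : Type*} (s : Finset ι) (hs : s.Nonempty) (g : ι → ℕ) :
    s.inf' hs (fun i => g i + 1) = s.inf' hs g + 1 := by
  have h : (InfHom.mk (fun x : ℕ => x + 1)
      (fun a b => (min_add_add_right a b 1).symm)) (s.inf' hs g)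
      = s.inf' hs ((fun x : ℕ => x + 1) ∘ g) := map_finset_inf' _ hs g
  exact h.symm

lemma inf'_univ_fin_succ {n : ℕ} (f : Fin (n + 2) → ℕ) :
    Finset.univ.inf' Finset.univ_nonempty f
      = min (f 0) (Finset.univ.inf' Finset.univ_nonempty (fun j : Fin (n+1) => f j.succ)) := by
  apply le_antisymm
  · apply le_min
    · exact Finset.inf'_le _ (Finset.mem_univ _)
    · exact Finset.le_inf' _ _ fun j _ => Finset.inf'_le _ (Finset.mem_univ _)
  · apply Finset.le_inf'
    intro i _
    refine Fin.cases ?_ ?_ i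
    · exact min_le_left _ _
    · intro j
      exact le_trans (min_le_right _ _)
        (Finset.inf'_le (fun j : Fin (n+1) => f j.succ) (Finset.mem_univ j))

/-- pandoraM agrees with the inf' formula -/
lemma pandoraM_eq_inf' : ∀ n (ω : Fin (n+1) → Bool),
    pandoraM (n+1) ω = (Finset.univ.inf'
      (Finset.univ_nonempty)
      (fun i : Fin (n+1) => if ω i = true then (i : ℕ) + 1 else n + 1)) := by
  intro n
  induction n with
  | zero =>
      intro ω
      have h0 : (Finset.univ.inf' (Finset.univ_nonempty)
          (fun i : Fin 1 => if ω i = true then (i : ℕ) + 1 else 0 + 1))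
          = (if ω 0 = true then ((0 : Fin 1) : ℕ) + 1 else 0 + 1) := by
        apply le_antisymm
        · exact Finset.inf'_le _ (Finset.mem_univ 0)
        · exact Finset.le_inf' _ _ fun i _ =>
            le_of_eq (congrArg (fun i : Fin 1 => if ω i = true then (i : ℕ) + 1 else 0 + 1)
              (Subsingleton.elim 0 i))
      rw [h0]
      cases h : ω 0 <;> simp [pandoraM, h]
  | succ m ih =>
      intro ω
      rw [inf'_univ_fin_succ]
      have htail : (Finset.univ.inf' Finset.univ_nonempty
          (fun j : Fin (m+1) => if ω j.succ = true then ((j.succ : Fin (m+2)) : ℕ) + 1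
            else (m + 1) + 1))
          = pandoraM (m+1) (fun j => ω j.succ) + 1 := by
        have heq : (fun j : Fin (m+1) => if ω j.succ = true then ((j.succ : Fin (m+2)) : ℕ) + 1
            else (m + 1) + 1)
            = fun j : Fin (m+1) =>
              (if (fun k => ω k.succ) j = true then (j : ℕ) + 1 else m + 1) + 1 := by
          funext j
          by_cases h : ω j.succ = true <;> simp [h, Fin.val_succ]
        rw [heq, inf'_add_one, ← ih (fun j => ω j.succ)]
      rw [htail, pandoraM_succ]
      have hle := pandoraM_le (m+1) (fun j => ω j.succ)
      by_cases h : ω 0 = true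
      · rw [if_pos h, if_pos h]
        simp only [Fin.val_zero]
        omega
      · rw [if_neg h, if_neg h]
        omega

/-- total weight is 1 -/
lemma pandora_sum_wt (p : ℝ) : ∀ n, ∑ ω : Fin n → Bool, ∏ i, pandoraWt p (ω i) = 1 := by
  intro n
  induction n with
  | zero => simp
  | succ m ih =>
      rw [← (Fin.consEquiv fun _ : Fin (m+1) => Bool).sum_comp, Fintype.sum_prod_type, Fintype.sum_bool]
      have key : ∀ b : Bool, ∀ ω' : Fin m → Bool,
          (∏ i, pandoraWt p ((Fin.consEquiv fun _ : Fin (m+1) => Bool) (b, ω') i))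
          = pandoraWt p b * ∏ j, pandoraWt p (ω' j) := by
        intro b ω'
        rw [Fin.prod_univ_succ]
        simp [Fin.consEquiv]
      simp only [key]
      rw [← Finset.mul_sum, ← Finset.mul_sum, ih]
      simp [pandoraWt]

lemma pandora_key (p : ℝ) (hp : 0 < p) :
    ∀ n, ∑ ω : Fin n → Bool, (∏ i, pandoraWt p (ω i)) *
        ((1 / p ^ 2) * (if ∃ i, ω i = true then (1 : ℝ) else 0) - (pandoraM n ω : ℝ))
      = (1 - (1 - p) ^ n) * (1 / p ^ 2 - 1 / p) := by
  intro n
  induction n with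
  | zero => simp [pandoraM]
  | succ m ih =>
      rw [← (Fin.consEquiv fun _ : Fin (m+1) => Bool).sum_comp, Fintype.sum_prod_type, Fintype.sum_bool]
      have hz : ∀ b (ω' : Fin m → Bool), (Fin.consEquiv fun _ : Fin (m+1) => Bool) (b, ω') 0 = b := by
        intro b ω'; simp [Fin.consEquiv]
      have hs : ∀ b (ω' : Fin m → Bool) (j : Fin m),
          (Fin.consEquiv fun _ : Fin (m+1) => Bool) (b, ω') j.succ = ω' j := by
        intro b ω' j; simp [Fin.consEquiv]
      have hprod : ∀ b (ω' : Fin m → Bool),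
          (∏ i, pandoraWt p ((Fin.consEquiv fun _ : Fin (m+1) => Bool) (b, ω') i))
          = pandoraWt p b * ∏ j, pandoraWt p (ω' j) := by
        intro b ω'
        rw [Fin.prod_univ_succ, hz]
        all_goals
          exact congrArg (HMul.hMul (pandoraWt p b)) (Finset.prod_congr rfl fun j _ => by rw [hs])
      have hex : ∀ b (ω' : Fin m → Bool),
          (∃ i, (Fin.consEquiv fun _ : Fin (m+1) => Bool) (b, ω') i = true) ↔
          (b = true ∨ ∃ j, ω' j = true) := by
        intro b ω'
        rw [Fin.exists_fin_succ, hz]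
        constructor
        · rintro (h | ⟨j, h⟩)
          · exact Or.inl h
          · exact Or.inr ⟨j, by rwa [hs] at h⟩
        · rintro (h | ⟨j, h⟩)
          · exact Or.inl h
          · exact Or.inr ⟨j, by rwa [hs]⟩
      have hM : ∀ b (ω' : Fin m → Bool),
          pandoraM (m+1) ((Fin.consEquiv fun _ : Fin (m+1) => Bool) (b, ω'))
          = if b then 1 else pandoraM m ω' + 1 := by
        intro b ω'
        have hcomp : (fun j => (Fin.consEquiv fun _ : Fin (m+1) => Bool) (b, ω') j.succ) = ω' :=
          funext fun j => hs b ω' j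
        rw [pandoraM_succ, hz]
        try rw [hcomp]
      -- true branch
      have htrue : ∑ ω' : Fin m → Bool,
          (∏ i, pandoraWt p ((Fin.consEquiv fun _ : Fin (m+1) => Bool) (true, ω') i)) *
            ((1 / p ^ 2) * (if ∃ i, (Fin.consEquiv fun _ : Fin (m+1) => Bool) (true, ω') i = true
                then (1:ℝ) else 0) - (pandoraM (m+1) ((Fin.consEquiv fun _ : Fin (m+1) => Bool) (true, ω')) : ℝ))
          = p * (1 / p ^ 2 - 1) := by
        have : ∀ ω' : Fin m → Bool,
            (∏ i, pandoraWt p ((Fin.consEquiv fun _ : Fin (m+1) => Bool) (true, ω') i)) *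
            ((1 / p ^ 2) * (if ∃ i, (Fin.consEquiv fun _ : Fin (m+1) => Bool) (true, ω') i = true
                then (1:ℝ) else 0) - (pandoraM (m+1) ((Fin.consEquiv fun _ : Fin (m+1) => Bool) (true, ω')) : ℝ))
            = (p * (1 / p ^ 2 - 1)) * ∏ j, pandoraWt p (ω' j) := by
          intro ω'
          rw [hprod, hM]
          have : (∃ i, (Fin.consEquiv fun _ : Fin (m+1) => Bool) (true, ω') i = true) := by
            rw [hex]; exact Or.inl rfl
          rw [if_pos this]
          simp only [if_true, Nat.cast_one, pandoraWt]
          ring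
        rw [Finset.sum_congr rfl fun ω' _ => this ω', ← Finset.mul_sum, pandora_sum_wt, mul_one]
      -- false branch
      have hfalse : ∑ ω' : Fin m → Bool,
          (∏ i, pandoraWt p ((Fin.consEquiv fun _ : Fin (m+1) => Bool) (false, ω') i)) *
            ((1 / p ^ 2) * (if ∃ i, (Fin.consEquiv fun _ : Fin (m+1) => Bool) (false, ω') i = true
                then (1:ℝ) else 0) - (pandoraM (m+1) ((Fin.consEquiv fun _ : Fin (m+1) => Bool) (false, ω')) : ℝ))
          = (1 - p) * ((1 - (1 - p) ^ m) * (1 / p ^ 2 - 1 / p) - 1) := by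
        have step : ∀ ω' : Fin m → Bool,
            (∏ i, pandoraWt p ((Fin.consEquiv fun _ : Fin (m+1) => Bool) (false, ω') i)) *
            ((1 / p ^ 2) * (if ∃ i, (Fin.consEquiv fun _ : Fin (m+1) => Bool) (false, ω') i = true
                then (1:ℝ) else 0) - (pandoraM (m+1) ((Fin.consEquiv fun _ : Fin (m+1) => Bool) (false, ω')) : ℝ))
            = (1 - p) * ((∏ j, pandoraWt p (ω' j)) *
                ((1 / p ^ 2) * (if ∃ j, ω' j = true then (1:ℝ) else 0) - (pandoraM m ω' : ℝ))
              - (∏ j, pandoraWt p (ω' j))) := by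
          intro ω'
          rw [hprod, hM]
          have hiff : (∃ i, (Fin.consEquiv fun _ : Fin (m+1) => Bool) (false, ω') i = true) ↔
              (∃ j, ω' j = true) := by
            rw [hex]; simp
          by_cases h : ∃ j, ω' j = true
          · rw [if_pos (hiff.mpr h), if_pos h]
            simp only [Bool.false_eq_true, if_false, pandoraWt, Nat.cast_add, Nat.cast_one]
            ring
          · rw [if_neg (fun hh => h (hiff.mp hh)), if_neg h]
            simp only [Bool.false_eq_true, if_false, pandoraWt, Nat.cast_add, Nat.cast_one]
            ring
        rw [Finset.sum_congr rfl fun ω' _ => step ω', ← Finset.mul_sum, Finset.sum_sub_distrib,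
          ih, pandora_sum_wt]
      rw [htrue, hfalse]
      have hp' : p ≠ 0 := ne_of_gt hp
      field_simp
      ring

theorem pandora_greedy_example_value
    (n : ℕ) (hn : 0 < n) (p : ℝ) (hp : 0 < p) (hp1 : p ≤ 1)
    (μ : Measure (Fin n → Bool))
    (hμ : μ = Measure.pi fun _ : Fin n =>
        (ENNReal.ofReal p • Measure.dirac true
          + ENNReal.ofReal (1 - p) • Measure.dirac false))
    (N : (Fin n → Bool) → ℕ)
    (hN : ∀ ω, N ω = Finset.univ.inf' ⟨⟨0, hn⟩, Finset.mem_univ _⟩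
        (fun i : Fin n => if ω i = true then (i : ℕ) + 1 else n)) :
    ∫ ω, ((1 / p ^ 2) * (if ∃ i, ω i = true then (1 : ℝ) else 0) - (N ω : ℝ)) ∂μ
      = (1 - (1 - p) ^ n) * (1 / p ^ 2 - 1 / p) := by
  obtain ⟨m, rfl⟩ : ∃ m, n = m + 1 := ⟨n - 1, by omega⟩
  set ν : Measure Bool :=
    ENNReal.ofReal p • Measure.dirac true + ENNReal.ofReal (1 - p) • Measure.dirac false with hν
  have h1p : (0:ℝ) ≤ 1 - p := by linarith
  have hνb : ∀ b : Bool, ν {b} = ENNReal.ofReal (pandoraWt p b) := by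
    intro b
    rw [hν]
    cases b <;>
      simp [Measure.dirac_apply' _ (measurableSet_singleton _), pandoraWt,
        Set.indicator_apply]
  have hνprob : IsProbabilityMeasure ν := by
    constructor
    have : (Set.univ : Set Bool) = {true} ∪ {false} := by
      ext b; cases b <;> simp
    rw [this, measure_union (by simp) (measurableSet_singleton _), hνb, hνb]
    rw [pandoraWt, pandoraWt]
    simp only [if_true, Bool.false_eq_true, if_false]
    rw [← ENNReal.ofReal_add hp.le h1p]
    norm_num
  haveI : IsProbabilityMeasure μ := by
    rw [hμ]
    exact MeasureTheory.Measure.pi.instIsProbabilityMeasure _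
  have hsing : ∀ ω : Fin (m+1) → Bool, (μ {ω}).toReal = ∏ i, pandoraWt p (ω i) := by
    intro ω
    rw [hμ, ← Set.univ_pi_singleton ω, Measure.pi_pi]
    simp only [← hν, hνb]
    rw [ENNReal.toReal_prod]
    exact Finset.prod_congr rfl fun i _ => ENNReal.toReal_ofReal (by
      rw [pandoraWt]; split <;> [exact hp.le; exact h1p])
  have hNM : ∀ ω, (N ω : ℝ) = (pandoraM (m+1) ω : ℝ) := by
    intro ω
    rw [hN, pandoraM_eq_inf' m ω]
  rw [integral_fintype (Integrable.of_finite)]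
  have := pandora_key p hp (m+1)
  rw [← this]
  apply Finset.sum_congr rfl
  intro ω _
  rw [smul_eq_mul, measureReal_def, hsing, hNM]
end
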